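/- arXiv:2502.05578 — 8 statements merged into one kernel-verified Lean document; each statement's English description precedes it below -/
import Mathlib

section
/- In the Chinese restaurant process with parameter θ>0, for r disjoint tuples of increasing positive integers (k₁^{(s)},...,k_N^{(s)}, m^{(s)}), s ∈ [r], the probability that simultaneously for every s the set {k₁^{(s)},...,k_N^{(s)}, m^{(s)}} is a block of P_{m^{(s)}} equals θ^r · ∏_{s=1}^r N!/((θ + m^{(s)} - l^{(s)} - 1)^{\underline{N+1}}), where l^{(s)} is the number of indices k_p^{(s')} (p∈[N], s'∈[r]) with k_p^{(s')} < m^{(s)} and m^{(s')} > m^{(s)}. -/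
open MeasureTheory ProbabilityTheory Finset

/-- The event that, in the Chinese restaurant process built from the attachment
variables `I`, the set `{k 0, …, k N}` (with `k 0 < … < k N = m`) is a block of
the partition `P_m` at step `m`. -/
def crpBlockEvent {Ω : Type*} (I : ℕ → Ω → ℕ) {N : ℕ} (k : Fin (N + 1) → ℕ) : Set Ω :=
  {ω | I (k 0) ω = k 0 ∧
    (∀ p : Fin (N + 1), p ≠ 0 → ∃ q, q < p ∧ I (k p) ω = k q) ∧
    (∀ i : ℕ, k 0 < i → i ≤ k (Fin.last N) → (∀ p, k p ≠ i) →
      ∀ q : Fin (N + 1), (k q : ℕ) < i → I i ω ≠ k q)}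

/-!
The event factorises over the coordinates `i` of `E = ⋃ₛ [k_s 0, m_s]`: `I_{k_s 0}` must open a
new block (weight `θ`), `I_{k_s p}` must pick one of the `p` earlier members of its tuple
(weight `p`), and every other `i ∈ E` must avoid the `f(i)` tuple members `c < i` whose tuple is
still open at `i` (weight `θ + i - 1 - f(i)`); each weight is divided by `θ + i - 1`. By
independence the probability is
`θ^r N!^r ∏_{i ∈ E \ C} (θ + (i - f(i)) - 1) / ∏_{i ∈ E} (θ + i - 1)`.

The numerators telescope against the denominators: the points `i - f(i)` for `i ∈ E \ C`,
together with the `N + 1` consecutive integers ending at `m_s - l_s` for each tuple `s`, enumerate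
`E` exactly once. Indeed, order the keys (the `i ∉ C` and the maxima `m_s`) increasingly; their
images (a point, resp. an interval of length `N + 1`) then increase strictly, because
`f(y) - f(x) ≤ y - x - 1 - #{members of x's tuple below x}` for a key `x < y`, and they cover `E`
by counting. Only `∏ₛ ∏_{j ≤ N} (θ + m_s - l_s - 1 - j)` survives in the denominator.
-/

open scoped Nat

/- `C ⊆ ℕ` is partitioned into blocks and `d c` is the maximum of the block of `c`; then `span C d`
is the `E` above and `#(openAt C d i)` is `f(i)`. -/
namespace BlockSpan

variable (C : Finset ℕ) (d : ℕ → ℕ)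

def openAt (y : ℕ) : Finset ℕ := {c ∈ C | c < y ∧ y ≤ d c}

def earlier (x : ℕ) : Finset ℕ := {c ∈ C | c < x ∧ d c = x}

def span : Finset ℕ := C.biUnion fun c => Icc c (d c)

def tops : Finset ℕ := {t ∈ C | d t = t}

def shift (x : ℕ) : ℕ := x - #(openAt C d x)

def block (x : ℕ) : Finset ℕ := Icc (shift C d x) (shift C d x + #(earlier C d x))

variable {C d}

lemma card_openAt_le (y : ℕ) : #(openAt C d y) ≤ y :=
  (card_le_card fun _ hc => mem_range.2 (mem_filter.1 hc).2.1).trans (card_range y).le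

lemma earlier_subset_openAt (x : ℕ) : earlier C d x ⊆ openAt C d x := by
  intro c hc
  simp only [earlier, openAt, mem_filter] at hc ⊢
  exact ⟨hc.1, hc.2.1, hc.2.2.ge⟩

lemma openAt_eq_union (x : ℕ) :
    openAt C d x = earlier C d x ∪ {c ∈ C | c < x ∧ x < d c} := by
  ext c
  simp only [openAt, earlier, mem_union, mem_filter, le_iff_lt_or_eq]
  tauto

lemma openAt_subset_Ico (hC : ∀ c ∈ C, 1 ≤ c) (y : ℕ) : openAt C d y ⊆ Ico 1 y := fun c hc => by
  rw [openAt, mem_filter] at hc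
  exact mem_Ico.2 ⟨hC c hc.1, hc.2.1⟩

-- An element open at `y` but not at `x` lies strictly between `x` and `y`, while the earlier
-- members of the block of `x` are open at `x` but no longer at `y`.
lemma shift_add_card_earlier_lt {x y : ℕ} (hx : x ∉ C ∨ d x = x) (hxy : x < y) :
    shift C d x + #(earlier C d x) < shift C d y := by
  have hdisj : Disjoint (openAt C d y) (earlier C d x) := by
    refine disjoint_left.2 fun c hcy hcx => ?_
    simp only [earlier, openAt, mem_filter] at hcy hcx
    omega
  have hsub : openAt C d y ∪ earlier C d x ⊆ openAt C d x ∪ Ioo x y := by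
    intro c hc
    simp only [earlier, openAt, mem_union, mem_filter, mem_Ioo] at hc ⊢
    rcases lt_trichotomy c x with hcx | rfl | hxc
    · rcases hc with ⟨hc, -, hyc⟩ | ⟨hc, -, hdc⟩ <;> exact Or.inl ⟨hc, hcx, by omega⟩
    · exfalso
      rcases hc with ⟨hc, -, hyc⟩ | ⟨-, hcc, -⟩
      · rcases hx with hx | hx <;> [exact hx hc; omega]
      · exact hcc.false
    · rcases hc with ⟨-, hcy, -⟩ | ⟨-, hcx, -⟩ <;> [exact Or.inr ⟨hxc, hcy⟩; omega]
  have hcard := (card_le_card hsub).trans (card_union_le _ _)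
  rw [card_union_of_disjoint hdisj, Nat.card_Ioo] at hcard
  have := card_openAt_le (C := C) (d := d) x
  have := card_openAt_le (C := C) (d := d) y
  rw [shift, shift]
  omega

lemma Icc_shift_subset_span {i : ℕ} (hi : i ∈ span C d) : Icc (shift C d i) i ⊆ span C d := by
  obtain ⟨c₀, hc₀, hc₀min⟩ := exists_min_image {c ∈ C | c ≤ i ∧ i ≤ d c} id <| by
    obtain ⟨c, hc, hci⟩ := mem_biUnion.1 hi
    exact ⟨c, mem_filter.2 ⟨hc, mem_Icc.1 hci⟩⟩
  rw [mem_filter] at hc₀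
  have hopen : openAt C d i ⊆ Ico c₀ i := fun c hc => by
    rw [openAt, mem_filter] at hc
    exact mem_Ico.2 ⟨hc₀min c (mem_filter.2 ⟨hc.1, hc.2.1.le, hc.2.2⟩), hc.2.1⟩
  have := (card_le_card hopen).trans_eq (Nat.card_Ico c₀ i)
  intro j hj
  rw [mem_Icc, shift] at hj
  exact mem_biUnion.2 ⟨c₀, hc₀.1, mem_Icc.2 ⟨by omega, by omega⟩⟩

lemma one_le_of_mem_span (hC : ∀ c ∈ C, 1 ≤ c) {i : ℕ} (hi : i ∈ span C d) : 1 ≤ i := by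
  obtain ⟨c, hc, hci⟩ := mem_biUnion.1 hi
  exact (hC c hc).trans (mem_Icc.1 hci).1

lemma one_le_shift (hC : ∀ c ∈ C, 1 ≤ c) {i : ℕ} (hi : i ∈ span C d) : 1 ≤ shift C d i :=
  one_le_of_mem_span hC (Icc_shift_subset_span hi (left_mem_Icc.2 (Nat.sub_le _ _)))

lemma subset_span (hle : ∀ c ∈ C, c ≤ d c) : C ⊆ span C d :=
  fun c hc => mem_biUnion.2 ⟨c, hc, mem_Icc.2 ⟨le_rfl, hle c hc⟩⟩

lemma disjoint_sdiff_tops : Disjoint (span C d \ C) (tops C d) :=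
  disjoint_sdiff_self_left.mono_right (filter_subset _ _)

lemma pairwiseDisjoint_block :
    ((span C d \ C ∪ tops C d : Finset ℕ) : Set ℕ).PairwiseDisjoint (block C d) := by
  have hkey : ∀ x ∈ span C d \ C ∪ tops C d, x ∉ C ∨ d x = x := fun x hx => by
    rcases mem_union.1 hx with hx | hx
    exacts [Or.inl (mem_sdiff.1 hx).2, Or.inr (mem_filter.1 hx).2]
  have hlt : ∀ x ∈ span C d \ C ∪ tops C d, ∀ y, x < y →
      Disjoint (block C d x) (block C d y) := fun x hx y hxy => by
    have := shift_add_card_earlier_lt (hkey x hx) hxy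
    exact disjoint_left.2 fun i hix hiy => by
      rw [block, mem_Icc] at hix hiy
      omega
  intro x hx y hy hxy
  rcases hxy.lt_or_gt with h | h
  exacts [hlt x hx y h, (hlt y hy x h).symm]

lemma insert_earlier_eq (hle : ∀ c ∈ C, c ≤ d c) {t : ℕ} (ht : t ∈ tops C d) :
    insert t (earlier C d t) = {c ∈ C | d c = t} := by
  rw [tops, mem_filter] at ht
  ext c
  simp only [earlier, mem_insert, mem_filter]
  constructor
  · rintro (rfl | ⟨hc, -, hct⟩) <;> tauto
  · rintro ⟨hc, rfl⟩
    rcases (hle c hc).lt_or_eq with h | h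
    exacts [Or.inr ⟨hc, h, rfl⟩, Or.inl h]

lemma sum_card_earlier_add_one (hle : ∀ c ∈ C, c ≤ d c) (htop : ∀ c ∈ C, d c ∈ tops C d) :
    ∑ t ∈ tops C d, (#(earlier C d t) + 1) = #C := by
  rw [card_eq_sum_card_fiberwise htop]
  refine sum_congr rfl fun t ht => ?_
  rw [← insert_earlier_eq hle ht, card_insert_of_notMem]
  simp [earlier]

lemma earlier_eq_empty (htop : ∀ c ∈ C, d c ∈ tops C d) {x : ℕ} (hx : x ∉ C) :
    earlier C d x = ∅ :=
  filter_eq_empty_iff.2 fun c hc ⟨_, hcx⟩ => hx (hcx ▸ (mem_filter.1 (htop c hc)).1)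

lemma biUnion_block (hle : ∀ c ∈ C, c ≤ d c) (htop : ∀ c ∈ C, d c ∈ tops C d) :
    (span C d \ C ∪ tops C d).biUnion (block C d) = span C d := by
  refine eq_of_subset_of_card_le (fun i hi => ?_) ?_
  · obtain ⟨x, hx, hix⟩ := mem_biUnion.1 hi
    have hxspan : x ∈ span C d := by
      rcases mem_union.1 hx with hx | hx
      exacts [(mem_sdiff.1 hx).1, subset_span hle (mem_filter.1 hx).1]
    refine Icc_shift_subset_span hxspan (Icc_subset_Icc le_rfl ?_ hix)
    have := card_le_card (earlier_subset_openAt (C := C) (d := d) x)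
    have := card_openAt_le (C := C) (d := d) x
    rw [shift]
    omega
  · rw [card_biUnion pairwiseDisjoint_block, sum_union disjoint_sdiff_tops]
    simp only [block, Nat.card_Icc, add_assoc, Nat.add_sub_cancel_left]
    rw [sum_card_earlier_add_one hle htop, sum_congr rfl fun x hx => by
        rw [earlier_eq_empty htop (mem_sdiff.1 hx).2, card_empty, zero_add],
      sum_const, smul_eq_mul, mul_one, card_sdiff_of_subset (subset_span hle),
      Nat.sub_add_cancel (card_le_card (subset_span hle))]

theorem prod_span {M : Type*} [CommMonoid M] (hle : ∀ c ∈ C, c ≤ d c)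
    (htop : ∀ c ∈ C, d c ∈ tops C d) (F : ℕ → M) :
    ∏ i ∈ span C d, F i =
      (∏ i ∈ span C d \ C, F (shift C d i)) * ∏ t ∈ tops C d, ∏ i ∈ block C d t, F i := by
  conv_lhs => rw [← biUnion_block hle htop, prod_biUnion pairwiseDisjoint_block,
    prod_union disjoint_sdiff_tops]
  congr 1
  refine prod_congr rfl fun i hi => ?_
  rw [block, earlier_eq_empty htop (mem_sdiff.1 hi).2, card_empty, add_zero, Icc_self,
    prod_singleton]

end BlockSpan

open BlockSpan

def blockConstraint {N : ℕ} (k : Fin (N + 1) → ℕ) (i : ℕ) : Set ℕ :=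
  {v | (k 0 = i → v = i) ∧ (∀ p, p ≠ 0 → k p = i → ∃ q < p, v = k q) ∧
    (k 0 < i → i ≤ k (Fin.last N) → (∀ p, k p ≠ i) → ∀ q, k q < i → v ≠ k q)}

lemma crpBlockEvent_eq_iInter {Ω : Type*} (I : ℕ → Ω → ℕ) {N : ℕ} (k : Fin (N + 1) → ℕ) :
    crpBlockEvent I k = ⋂ i, I i ⁻¹' blockConstraint k i := by
  ext ω
  simp only [crpBlockEvent, blockConstraint, Set.mem_iInter, Set.mem_preimage,
    Set.mem_ofPred_eq]
  constructor
  · rintro ⟨h₀, hsucc, hgap⟩ i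
    exact ⟨fun h => h ▸ h₀, fun p hp h => h ▸ hsucc p hp, hgap i⟩
  · intro h
    exact ⟨(h _).1 rfl, fun p hp => (h _).2.1 p hp rfl, fun i => (h i).2.2⟩

section Tuples

variable {r N : ℕ} (k : Fin r → Fin (N + 1) → ℕ)

def tupleElems : Finset ℕ := univ.image fun sp : Fin r × Fin (N + 1) => k sp.1 sp.2

-- The value off `tupleElems k` is never used.
noncomputable def blockMax (c : ℕ) : ℕ :=
  if h : ∃ sp : Fin r × Fin (N + 1), k sp.1 sp.2 = c then k h.choose.1 (Fin.last N) else c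

-- The paper's `l^{(s)}`.
def crossCount (s : Fin r) : ℕ :=
  #{sp : Fin r × Fin N | k sp.1 sp.2.castSucc < k s (Fin.last N) ∧
    k s (Fin.last N) < k sp.1 (Fin.last N)}

def admissible (i : ℕ) : Set ℕ := ⋂ s, blockConstraint (k s) i

variable {k}

lemma mem_tupleElems {c : ℕ} : c ∈ tupleElems k ↔ ∃ s p, k s p = c := by
  simp [tupleElems]

lemma one_le_of_mem_tupleElems (hmono : ∀ s, StrictMono (k s)) (hpos : ∀ s, 1 ≤ k s 0) :
    ∀ c ∈ tupleElems k, 1 ≤ c := by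
  simp only [mem_tupleElems, forall_exists_index]
  rintro _ s p rfl
  exact (hpos s).trans ((hmono s).monotone (Fin.zero_le p))

lemma blockMax_apply (hdisj : ∀ s p s' p', k s p = k s' p' → s = s' ∧ p = p') (s : Fin r)
    (p : Fin (N + 1)) : blockMax k (k s p) = k s (Fin.last N) := by
  have h : ∃ sp : Fin r × Fin (N + 1), k sp.1 sp.2 = k s p := ⟨(s, p), rfl⟩
  rw [blockMax, dif_pos h, (hdisj _ _ _ _ h.choose_spec).1]

lemma le_blockMax (hmono : ∀ s, StrictMono (k s))
    (hdisj : ∀ s p s' p', k s p = k s' p' → s = s' ∧ p = p') :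
    ∀ c ∈ tupleElems k, c ≤ blockMax k c := by
  simp only [mem_tupleElems, forall_exists_index]
  rintro _ s p rfl
  exact (blockMax_apply hdisj s p).symm ▸ (hmono s).monotone (Fin.le_last p)

lemma blockMax_mem_tops (hdisj : ∀ s p s' p', k s p = k s' p' → s = s' ∧ p = p') :
    ∀ c ∈ tupleElems k, blockMax k c ∈ tops (tupleElems k) (blockMax k) := by
  simp only [mem_tupleElems, forall_exists_index]
  rintro _ s p rfl
  rw [blockMax_apply hdisj, tops, mem_filter, mem_tupleElems, blockMax_apply hdisj]
  exact ⟨⟨s, _, rfl⟩, rfl⟩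

lemma tops_tupleElems (hdisj : ∀ s p s' p', k s p = k s' p' → s = s' ∧ p = p') :
    tops (tupleElems k) (blockMax k) = univ.image fun s => k s (Fin.last N) := by
  ext t
  simp only [tops, mem_filter, mem_tupleElems, mem_image, mem_univ, true_and]
  constructor
  · rintro ⟨⟨s, p, rfl⟩, h⟩
    rw [blockMax_apply hdisj] at h
    exact ⟨s, h⟩
  · rintro ⟨s, rfl⟩
    exact ⟨⟨s, _, rfl⟩, blockMax_apply hdisj s _⟩

lemma mem_span_tupleElems (hdisj : ∀ s p s' p', k s p = k s' p' → s = s' ∧ p = p')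
    {s : Fin r} {i : ℕ} (h₀ : k s 0 ≤ i) (hlast : i ≤ k s (Fin.last N)) :
    i ∈ span (tupleElems k) (blockMax k) :=
  mem_biUnion.2 ⟨k s 0, mem_tupleElems.2 ⟨s, 0, rfl⟩,
    mem_Icc.2 ⟨h₀, (blockMax_apply hdisj s 0).symm ▸ hlast⟩⟩

lemma card_earlier_last (hmono : ∀ s, StrictMono (k s))
    (hdisj : ∀ s p s' p', k s p = k s' p' → s = s' ∧ p = p') (s : Fin r) :
    #(earlier (tupleElems k) (blockMax k) (k s (Fin.last N))) = N := by
  have hfiber : {c ∈ tupleElems k | blockMax k c = k s (Fin.last N)} = univ.image (k s) := by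
    ext c
    simp only [mem_filter, mem_tupleElems, mem_image, mem_univ, true_and]
    constructor
    · rintro ⟨⟨s', p, rfl⟩, h⟩
      rw [blockMax_apply hdisj] at h
      exact ⟨p, by rw [(hdisj _ _ _ _ h).1]⟩
    · rintro ⟨p, rfl⟩
      exact ⟨⟨s, p, rfl⟩, blockMax_apply hdisj s p⟩
  have := congrArg card (insert_earlier_eq (le_blockMax hmono hdisj)
    ((tops_tupleElems hdisj).symm ▸ mem_image_of_mem _ (mem_univ s)))
  rw [hfiber, card_image_of_injective _ (hmono s).injective, card_univ, Fintype.card_fin,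
    card_insert_of_notMem (by simp [earlier])] at this
  omega

lemma card_openAt_last (hmono : ∀ s, StrictMono (k s))
    (hdisj : ∀ s p s' p', k s p = k s' p' → s = s' ∧ p = p') (s : Fin r) :
    #(openAt (tupleElems k) (blockMax k) (k s (Fin.last N))) = crossCount k s + N := by
  rw [openAt_eq_union, card_union_of_disjoint, card_earlier_last hmono hdisj, add_comm]
  · congr 1
    symm
    refine card_nbij (fun sp => k sp.1 sp.2.castSucc) ?_ ?_ ?_
    · rintro ⟨s', p⟩ h
      rw [mem_coe, mem_filter] at h
      rw [mem_coe, mem_filter, mem_tupleElems, blockMax_apply hdisj]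
      exact ⟨⟨s', _, rfl⟩, h.2⟩
    · rintro ⟨s₁, p₁⟩ - ⟨s₂, p₂⟩ - h
      obtain ⟨h₁, h₂⟩ := hdisj _ _ _ _ h
      exact Prod.ext h₁ (Fin.castSucc_injective _ h₂)
    · intro c hc
      rw [mem_coe, mem_filter, mem_tupleElems] at hc
      obtain ⟨⟨s', p, rfl⟩, hlt, hgt⟩ := hc
      rw [blockMax_apply hdisj] at hgt
      induction p using Fin.lastCases with
      | last => exact absurd hgt hlt.not_gt
      | cast p => exact ⟨(s', p), by simpa [crossCount] using ⟨hlt, hgt⟩, rfl⟩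
  · refine disjoint_left.2 fun c h h' => ?_
    simp only [earlier, mem_filter] at h h'
    omega

lemma admissible_eq_univ (hmono : ∀ s, StrictMono (k s))
    (hdisj : ∀ s p s' p', k s p = k s' p' → s = s' ∧ p = p') {i : ℕ}
    (hi : i ∉ span (tupleElems k) (blockMax k)) : admissible k i = Set.univ := by
  have hspan : ∀ s p, k s 0 ≤ k s p ∧ k s p ≤ k s (Fin.last N) := fun s p =>
    ⟨(hmono s).monotone (Fin.zero_le p), (hmono s).monotone (Fin.le_last p)⟩
  refine Set.eq_univ_of_forall fun v => Set.mem_iInter.2 fun s =>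
    ⟨fun h => ?_, fun p _ h => ?_, fun h₀ hlast => ?_⟩
  · exact absurd (mem_span_tupleElems hdisj (h ▸ le_rfl) (h ▸ (hspan s _).2)) hi
  · exact absurd (mem_span_tupleElems hdisj (h ▸ (hspan s p).1) (h ▸ (hspan s p).2)) hi
  · exact absurd (mem_span_tupleElems hdisj h₀.le hlast) hi

lemma admissible_first (hdisj : ∀ s p s' p', k s p = k s' p' → s = s' ∧ p = p') (s : Fin r) :
    admissible k (k s 0) = {k s 0} := by
  ext v
  simp only [admissible, blockConstraint, Set.mem_iInter, Set.mem_ofPred_eq,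
    Set.mem_singleton_iff]
  refine ⟨fun h => (h s).1 rfl, ?_⟩
  rintro rfl s'
  exact ⟨fun _ => rfl, fun p hp h => absurd (hdisj _ _ _ _ h).2 hp, fun _ _ _ q hq => hq.ne'⟩

lemma admissible_of_ne_zero (hdisj : ∀ s p s' p', k s p = k s' p' → s = s' ∧ p = p')
    (s : Fin r) {p : Fin (N + 1)} (hp : p ≠ 0) :
    admissible k (k s p) = ((Iio p).image (k s) : Finset ℕ) := by
  ext v
  simp only [admissible, blockConstraint, Set.mem_iInter, Set.mem_ofPred_eq, coe_image, coe_Iio,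
    Set.mem_image, Set.mem_Iio]
  constructor
  · intro h
    obtain ⟨q, hq, rfl⟩ := (h s).2.1 p hp rfl
    exact ⟨q, hq, rfl⟩
  · rintro ⟨q, hq, rfl⟩ s'
    refine ⟨fun h => absurd (hdisj _ _ _ _ h).2.symm hp, fun p' _ h => ?_,
      fun _ _ hne q' _ h => ?_⟩
    · obtain ⟨rfl, rfl⟩ := hdisj _ _ _ _ h
      exact ⟨q, hq, rfl⟩
    · obtain ⟨rfl, -⟩ := hdisj _ _ _ _ h
      exact hne p rfl

lemma admissible_of_notMem (hmono : ∀ s, StrictMono (k s))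
    (hdisj : ∀ s p s' p', k s p = k s' p' → s = s' ∧ p = p') {i : ℕ} (hi : i ∉ tupleElems k) :
    admissible k i = (openAt (tupleElems k) (blockMax k) i : Set ℕ)ᶜ := by
  have hne : ∀ s p, k s p ≠ i := fun s p h => hi (mem_tupleElems.2 ⟨s, p, h⟩)
  ext v
  simp only [admissible, blockConstraint, Set.mem_iInter, Set.mem_ofPred_eq, Set.mem_compl_iff,
    mem_coe, openAt, mem_filter, mem_tupleElems]
  constructor
  · rintro h ⟨⟨s, q, rfl⟩, hlt, hle⟩
    rw [blockMax_apply hdisj] at hle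
    exact (h s).2.2 (((hmono s).monotone (Fin.zero_le q)).trans_lt hlt) hle (hne s) q hlt rfl
  · intro h s
    refine ⟨fun h' => absurd h' (hne s 0), fun p _ h' => absurd h' (hne s p),
      fun _ hle _ q hlt hv => ?_⟩
    exact h ⟨⟨s, q, hv.symm⟩, hv ▸ hlt, hv ▸ (blockMax_apply hdisj s q).symm ▸ hle⟩

lemma iInter_crpBlockEvent {Ω : Type*} (I : ℕ → Ω → ℕ) (hmono : ∀ s, StrictMono (k s))
    (hdisj : ∀ s p s' p', k s p = k s' p' → s = s' ∧ p = p') :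
    ⋂ s, crpBlockEvent I (k s) =
      ⋂ i ∈ span (tupleElems k) (blockMax k), I i ⁻¹' admissible k i := by
  ext ω
  simp only [crpBlockEvent_eq_iInter, admissible, Set.mem_iInter, Set.mem_preimage]
  refine ⟨fun h i _ s => h s i, fun h s i => ?_⟩
  by_cases hi : i ∈ span (tupleElems k) (blockMax k)
  · exact h i hi s
  · exact Set.mem_iInter.1 ((admissible_eq_univ hmono hdisj hi).symm ▸ Set.mem_univ (I i ω)) s

lemma prod_tupleElems {M : Type*} [CommMonoid M]
    (hdisj : ∀ s p s' p', k s p = k s' p' → s = s' ∧ p = p') (F : ℕ → M) :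
    ∏ c ∈ tupleElems k, F c = ∏ s, ∏ p, F (k s p) := by
  rw [tupleElems, prod_image fun a _ b _ h => Prod.ext_iff.2 (hdisj _ _ _ _ h),
    Fintype.prod_prod_type]

lemma prod_tops_tupleElems {M : Type*} [CommMonoid M]
    (hdisj : ∀ s p s' p', k s p = k s' p' → s = s' ∧ p = p') (F : ℕ → M) :
    ∏ t ∈ tops (tupleElems k) (blockMax k), F t = ∏ s, F (k s (Fin.last N)) := by
  rw [tops_tupleElems hdisj, prod_image fun a _ b _ h => (hdisj _ _ _ _ h).1]

end Tuples

section Probability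

variable {Ω : Type*} [MeasurableSpace Ω] {P : Measure Ω} {θ : ℝ} {I : ℕ → Ω → ℕ}

lemma add_natCast_sub_one_pos (hθ : 0 < θ) {n : ℕ} (hn : 1 ≤ n) : 0 < θ + n - 1 := by
  have : (1 : ℝ) ≤ n := by exact_mod_cast hn
  linarith

lemma measure_preimage_finset (hmeas : ∀ n, Measurable (I n))
    (hjoin : ∀ n j : ℕ, 1 ≤ j → j < n → P {ω | I n ω = j} = ENNReal.ofReal (1 / (θ + n - 1)))
    {n : ℕ} {A : Finset ℕ} (hA : A ⊆ Ico 1 n) :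
    P (I n ⁻¹' A) = ENNReal.ofReal (#A / (θ + n - 1)) := by
  have hfiber : ∀ v ∈ A, P (I n ⁻¹' {v}) = ENNReal.ofReal (1 / (θ + n - 1)) := fun v hv =>
    hjoin n v (mem_Ico.1 (hA hv)).1 (mem_Ico.1 (hA hv)).2
  rw [← sum_measure_preimage_singleton A fun v _ => hmeas n (measurableSet_singleton v),
    sum_congr rfl hfiber, sum_const, nsmul_eq_mul, ← ENNReal.ofReal_natCast,
    ← ENNReal.ofReal_mul (Nat.cast_nonneg _), mul_one_div]

lemma measure_preimage_compl_finset [IsProbabilityMeasure P] (hmeas : ∀ n, Measurable (I n))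
    (hjoin : ∀ n j : ℕ, 1 ≤ j → j < n → P {ω | I n ω = j} = ENNReal.ofReal (1 / (θ + n - 1)))
    {n : ℕ} (hn : 0 < θ + n - 1) {A : Finset ℕ} (hA : A ⊆ Ico 1 n) :
    P (I n ⁻¹' (A : Set ℕ)ᶜ) = ENNReal.ofReal ((θ + n - 1 - #A) / (θ + n - 1)) := by
  rw [Set.preimage_compl, measure_compl (hmeas n .of_discrete) (measure_ne_top _ _),
    measure_univ, measure_preimage_finset hmeas hjoin hA, ← ENNReal.ofReal_one,
    ← ENNReal.ofReal_sub _ (by positivity), one_sub_div hn.ne']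

variable {r N : ℕ} {k : Fin r → Fin (N + 1) → ℕ}

lemma measure_admissible_of_notMem [IsProbabilityMeasure P] (hθ : 0 < θ)
    (hmeas : ∀ n, Measurable (I n))
    (hjoin : ∀ n j : ℕ, 1 ≤ j → j < n → P {ω | I n ω = j} = ENNReal.ofReal (1 / (θ + n - 1)))
    (hmono : ∀ s, StrictMono (k s)) (hpos : ∀ s, 1 ≤ k s 0)
    (hdisj : ∀ s p s' p', k s p = k s' p' → s = s' ∧ p = p') {i : ℕ}
    (hi : i ∈ span (tupleElems k) (blockMax k)) (hiC : i ∉ tupleElems k) :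
    P (I i ⁻¹' admissible k i) =
      ENNReal.ofReal ((θ + shift (tupleElems k) (blockMax k) i - 1) / (θ + i - 1)) := by
  have hC := one_le_of_mem_tupleElems hmono hpos
  rw [admissible_of_notMem hmono hdisj hiC, measure_preimage_compl_finset hmeas hjoin
    (add_natCast_sub_one_pos hθ (one_le_of_mem_span hC hi)) (openAt_subset_Ico hC i), shift,
    Nat.cast_sub (card_openAt_le i), add_sub_assoc', sub_right_comm]

lemma prod_measure_admissible_tuple (hθ : 0 < θ) (hmeas : ∀ n, Measurable (I n))
    (hnew : ∀ n : ℕ, 1 ≤ n → P {ω | I n ω = n} = ENNReal.ofReal (θ / (θ + n - 1)))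
    (hjoin : ∀ n j : ℕ, 1 ≤ j → j < n → P {ω | I n ω = j} = ENNReal.ofReal (1 / (θ + n - 1)))
    (hmono : ∀ s, StrictMono (k s)) (hpos : ∀ s, 1 ≤ k s 0)
    (hdisj : ∀ s p s' p', k s p = k s' p' → s = s' ∧ p = p') (s : Fin r) :
    ∏ p, P (I (k s p) ⁻¹' admissible k (k s p)) =
      ENNReal.ofReal (θ * N ! / ∏ p, (θ + k s p - 1)) := by
  have hk : ∀ p, 1 ≤ k s p := fun p =>
    one_le_of_mem_tupleElems hmono hpos _ (mem_tupleElems.2 ⟨s, p, rfl⟩)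
  have hfirst : P (I (k s 0) ⁻¹' admissible k (k s 0)) =
      ENNReal.ofReal (θ / (θ + k s 0 - 1)) := by
    rw [admissible_first hdisj]
    exact hnew _ (hpos s)
  have hlater : ∀ q : Fin N, P (I (k s q.succ) ⁻¹' admissible k (k s q.succ)) =
      ENNReal.ofReal ((q + 1) / (θ + k s q.succ - 1)) := fun q => by
    have hA : (Iio q.succ).image (k s) ⊆ Ico 1 (k s q.succ) := fun c hc => by
      obtain ⟨p, hp, rfl⟩ := mem_image.1 hc
      exact mem_Ico.2 ⟨hk p, hmono s (mem_Iio.1 hp)⟩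
    rw [admissible_of_ne_zero hdisj s q.succ_ne_zero, measure_preimage_finset hmeas hjoin hA,
      card_image_of_injective _ (hmono s).injective, Fin.card_Iio, Fin.val_succ]
    push_cast
    rfl
  have hfact : ∏ q : Fin N, ((q : ℝ) + 1) = N ! := by
    rw [Fin.prod_univ_eq_prod_range (fun q => (q : ℝ) + 1), ← prod_range_add_one_eq_factorial]
    push_cast
    rfl
  have hden := fun p => add_natCast_sub_one_pos hθ (hk p)
  rw [Fin.prod_univ_succ, hfirst, prod_congr rfl fun q _ => hlater q,
    ← ENNReal.ofReal_prod_of_nonneg fun q _ => (div_pos (by positivity) (hden _)).le,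
    ← ENNReal.ofReal_mul (div_pos hθ (hden 0)).le, prod_div_distrib, hfact, div_mul_div_comm,
    Fin.prod_univ_succ (fun p => θ + (k s p : ℝ) - 1)]

end Probability

section Weights

variable {r N : ℕ} {k : Fin r → Fin (N + 1) → ℕ}

lemma prod_block_last (θ : ℝ) (hmono : ∀ s, StrictMono (k s))
    (hdisj : ∀ s p s' p', k s p = k s' p' → s = s' ∧ p = p') (s : Fin r) :
    ∏ i ∈ block (tupleElems k) (blockMax k) (k s (Fin.last N)), (θ + i - 1) =
      ∏ j ∈ range (N + 1), (θ + k s (Fin.last N) - crossCount k s - 1 - j) := by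
  have hle := card_openAt_le (C := tupleElems k) (d := blockMax k) (k s (Fin.last N))
  rw [card_openAt_last hmono hdisj] at hle
  set a := k s (Fin.last N) - crossCount k s
  have hblock : block (tupleElems k) (blockMax k) (k s (Fin.last N)) =
      Ico (a + 1 - (N + 1)) (a + 1 - 0) := by
    ext i
    rw [block, shift, card_openAt_last hmono hdisj, card_earlier_last hmono hdisj, mem_Icc,
      mem_Ico]
    omega
  rw [hblock, ← prod_Ico_reflect (fun i => θ + (i : ℝ) - 1) 0 (by omega), range_eq_Ico]
  refine prod_congr rfl fun j hj => ?_
  rw [mem_Ico] at hj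
  rw [Nat.cast_sub (by omega), Nat.cast_sub (by omega)]
  ring

lemma prod_weights_eq {θ : ℝ} (hθ : 0 < θ) (hmono : ∀ s, StrictMono (k s))
    (hpos : ∀ s, 1 ≤ k s 0) (hdisj : ∀ s p s' p', k s p = k s' p' → s = s' ∧ p = p') :
    (∏ i ∈ span (tupleElems k) (blockMax k) \ tupleElems k,
        (θ + shift (tupleElems k) (blockMax k) i - 1) / (θ + i - 1)) *
      ∏ s, θ * N ! / ∏ p, (θ + k s p - 1) =
    θ ^ r * ∏ s, (N ! : ℝ) /
      ∏ j ∈ range (N + 1), (θ + k s (Fin.last N) - crossCount k s - 1 - j) := by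
  have hle := le_blockMax hmono hdisj
  have hsplit := prod_span hle (blockMax_mem_tops hdisj) fun i : ℕ => θ + (i : ℝ) - 1
  rw [← prod_sdiff (subset_span hle), prod_tupleElems hdisj, prod_tops_tupleElems hdisj]
    at hsplit
  simp only [prod_block_last θ hmono hdisj] at hsplit
  have hshift : ∏ i ∈ span (tupleElems k) (blockMax k) \ tupleElems k,
      (θ + shift (tupleElems k) (blockMax k) i - 1) ≠ 0 :=
    prod_ne_zero_iff.2 fun i hi => (add_natCast_sub_one_pos hθ
      (one_le_shift (one_le_of_mem_tupleElems hmono hpos) (mem_sdiff.1 hi).1)).ne'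
  rw [prod_div_distrib, prod_div_distrib, prod_div_distrib, prod_const, prod_const, card_univ,
    Fintype.card_fin, div_mul_div_comm, hsplit, mul_div_mul_left _ _ hshift, mul_pow,
    mul_div_assoc]

end Weights

theorem crp_joint_block_probability_general
    {Ω : Type*} [MeasurableSpace Ω] (P : Measure Ω) [IsProbabilityMeasure P]
    (θ : ℝ) (hθ : 0 < θ) (I : ℕ → Ω → ℕ) (hmeas : ∀ n, Measurable (I n))
    (hindep : iIndepFun I P)
    (hnew : ∀ n : ℕ, 1 ≤ n → P {ω | I n ω = n} = ENNReal.ofReal (θ / (θ + n - 1)))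
    (hjoin : ∀ n k : ℕ, 1 ≤ k → k < n →
      P {ω | I n ω = k} = ENNReal.ofReal (1 / (θ + n - 1)))
    (r N : ℕ) (k : Fin r → Fin (N + 1) → ℕ)
    (hmono : ∀ s, StrictMono (k s)) (hpos : ∀ s, 1 ≤ k s 0)
    (hdisj : ∀ s p s' p', k s p = k s' p' → s = s' ∧ p = p') :
    P (⋂ s : Fin r, crpBlockEvent I (k s)) =
      ENNReal.ofReal (θ ^ r * ∏ s : Fin r, (N.factorial : ℝ) /
        ∏ j ∈ Finset.range (N + 1),
          (θ + (k s (Fin.last N) : ℝ) -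
            (((Finset.univ.filter (fun sp : Fin r × Fin N =>
                k sp.1 sp.2.castSucc < k s (Fin.last N) ∧
                k s (Fin.last N) < k sp.1 (Fin.last N))).card : ℝ)) - 1 - (j : ℝ))) := by
  have hle := le_blockMax hmono hdisj
  have hC := one_le_of_mem_tupleElems hmono hpos
  have hden : ∀ i ∈ span (tupleElems k) (blockMax k), 0 < θ + i - 1 := fun i hi =>
    add_natCast_sub_one_pos hθ (one_le_of_mem_span hC hi)
  have hweight : ∀ i ∈ span (tupleElems k) (blockMax k) \ tupleElems k,
      0 ≤ (θ + shift (tupleElems k) (blockMax k) i - 1) / (θ + i - 1) := fun i hi =>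
    div_nonneg (add_natCast_sub_one_pos hθ (one_le_shift hC (mem_sdiff.1 hi).1)).le
      (hden i (mem_sdiff.1 hi).1).le
  have htuple : ∀ s ∈ univ, 0 ≤ θ * N ! / ∏ p, (θ + k s p - 1) := fun s _ =>
    div_nonneg (by positivity) <| prod_nonneg fun p _ =>
      (hden _ (subset_span hle (mem_tupleElems.2 ⟨s, p, rfl⟩))).le
  rw [iInter_crpBlockEvent I hmono hdisj,
    hindep.meas_biInter fun i _ => ⟨admissible k i, MeasurableSet.of_discrete, rfl⟩,
    ← prod_sdiff (subset_span hle), prod_tupleElems hdisj,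
    prod_congr rfl fun i hi => measure_admissible_of_notMem hθ hmeas hjoin hmono hpos hdisj
      (mem_sdiff.1 hi).1 (mem_sdiff.1 hi).2,
    prod_congr rfl fun s _ => prod_measure_admissible_tuple hθ hmeas hnew hjoin hmono hpos hdisj s,
    ← ENNReal.ofReal_prod_of_nonneg hweight, ← ENNReal.ofReal_prod_of_nonneg htuple,
    ← ENNReal.ofReal_mul (prod_nonneg hweight), prod_weights_eq hθ hmono hpos hdisj]
  rfl

theorem crp_joint_block_probability
    {Ω : Type*} [MeasurableSpace Ω] (P : Measure Ω) [IsProbabilityMeasure P]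
    (θ : ℝ) (hθ : 0 < θ) (I : ℕ → Ω → ℕ) (hmeas : ∀ n, Measurable (I n))
    (hindep : iIndepFun I P)
    (hnew : ∀ n : ℕ, 1 ≤ n → P {ω | I n ω = n} = ENNReal.ofReal (θ / (θ + n - 1)))
    (hjoin : ∀ n k : ℕ, 1 ≤ k → k < n →
      P {ω | I n ω = k} = ENNReal.ofReal (1 / (θ + n - 1)))
    (r N : ℕ) (hr : 1 ≤ r) (hN : 1 ≤ N) (k : Fin r → Fin (N + 1) → ℕ)
    (hmono : ∀ s, StrictMono (k s)) (hpos : ∀ s, 1 ≤ k s 0)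
    (hdisj : ∀ s p s' p', k s p = k s' p' → s = s' ∧ p = p') :
    P (⋂ s : Fin r, crpBlockEvent I (k s)) =
      ENNReal.ofReal (θ ^ r * ∏ s : Fin r, (N.factorial : ℝ) /
        ∏ j ∈ Finset.range (N + 1),
          (θ + (k s (Fin.last N) : ℝ) -
            (((Finset.univ.filter (fun sp : Fin r × Fin N =>
                k sp.1 sp.2.castSucc < k s (Fin.last N) ∧
                k s (Fin.last N) < k sp.1 (Fin.last N))).card : ℝ)) - 1 - (j : ℝ))) :=
  crp_joint_block_probability_general P θ hθ I hmeas hindep hnew hjoin r N k hmono hpos hdisj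
end

section
/- The measures μ^(N) are consistent under projection: for M > N and any Borel set B_N ⊆ X_N, defining B_{N↑M} = {(x₁,...,x_{M+1}) : (x₁,...,x_{N+1}) ∈ B_N, x_{N+1} ≤ x_{N+2} ≤ ... ≤ x_{M+1}}, one has μ^(M)(B_{N↑M}) = μ^(N)(B_N). -/
open MeasureTheory Finset

/-- The cone `X_N = {(x₁,…,x_N,y) ∈ (0,∞)^{N+1} : x₁ ≤ … ≤ x_N ≤ y}`. -/
def coneX (N : ℕ) : Set (Fin (N + 1) → ℝ) :=
  {x | (∀ i, 0 < x i) ∧ Monotone x}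

/-- The measure `μ^(N)` on `X_N` with density `θ · N! / y^{N+1}` with respect to
Lebesgue measure. -/
noncomputable def muN (θ : ℝ) (N : ℕ) : Measure (Fin (N + 1) → ℝ) :=
  (volume.restrict (coneX N)).withDensity
    (fun x => ENNReal.ofReal (θ * (N.factorial : ℝ) / (x (Fin.last N)) ^ (N + 1)))

/-!
Integrating out the top coordinate `y ≥ x_{K+1}` of the density `θ (K+1)! / y^{K+2}` of `μ^(K+1)`
leaves `θ K! / x_{K+1}^{K+1}`, the density of `μ^(K)`; since the cone `X_{K+1}` consists of the
points of `X_K` extended by such a `y`, `μ^(K+1) {x | (x₁,…,x_{K+1}) ∈ C, x_{K+1} ≤ x_{K+2}}`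
equals `μ^(K)(C)` for every measurable `C`. The set `B_{N↑M}` arises from `B` by `M - N` such
one-step extensions.
-/

open Set ENNReal

theorem lintegral_Ioi_rpow_of_lt {s : ℝ} (hs : s < -1) {a : ℝ} (ha : 0 < a) :
    ∫⁻ y in Ioi a, ENNReal.ofReal (y ^ s) = ENNReal.ofReal (-a ^ (s + 1) / (s + 1)) := by
  rw [← integral_Ioi_rpow_of_lt hs ha,
    ofReal_integral_eq_lintegral_ofReal (integrableOn_Ioi_rpow_of_lt hs ha)]
  filter_upwards [self_mem_ae_restrict measurableSet_Ioi] with y hy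
  exact Real.rpow_nonneg (ha.trans hy).le s

theorem lintegral_Ici_div_pow (c : ℝ) {a : ℝ} (ha : 0 < a) (n : ℕ) :
    ∫⁻ y in Ici a, ENNReal.ofReal (c / y ^ (n + 2)) =
      ENNReal.ofReal (c / ((n + 1) * a ^ (n + 1))) := by
  have hs : -(n + 2 : ℝ) < -1 := by linarith [(n.cast_nonneg : (0 : ℝ) ≤ n)]
  have hpow : ∀ y : ℝ, 0 < y → y ^ (n + 2) = (y ^ (-(n + 2 : ℝ)))⁻¹ := fun y hy => by
    rw [Real.rpow_neg hy.le, inv_inv]; norm_cast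
  have hint : ∀ y ∈ Ioi a, ENNReal.ofReal (c / y ^ (n + 2)) =
      ENNReal.ofReal c * ENNReal.ofReal (y ^ (-(n + 2 : ℝ))) := fun y hy => by
    rw [← ofReal_mul' (Real.rpow_nonneg (ha.trans hy).le _), hpow y (ha.trans hy), div_inv_eq_mul]
  rw [← Measure.restrict_congr_set Ioi_ae_eq_Ici, setLIntegral_congr_fun measurableSet_Ioi hint,
    lintegral_const_mul _ (by fun_prop), lintegral_Ioi_rpow_of_lt hs ha,
    ← ofReal_mul' (div_nonneg_of_nonpos (neg_nonpos.2 (Real.rpow_nonneg ha.le _)) (by linarith))]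
  congr 1
  rw [show -(n + 2 : ℝ) + 1 = -(n + 1 : ℝ) by ring, Real.rpow_neg ha.le,
    ← Real.rpow_natCast a (n + 1)]
  push_cast
  field_simp

theorem lintegral_eq_lintegral_snoc {α : Type*} [MeasureSpace α]
    [SigmaFinite (volume : Measure α)] {n : ℕ} {f : (Fin (n + 1) → α) → ℝ≥0∞} (hf : Measurable f) :
    ∫⁻ x, f x = ∫⁻ v : Fin n → α, ∫⁻ y, f (Fin.snoc v y) := by
  set e := MeasurableEquiv.piFinSuccAbove (fun _ : Fin (n + 1) => α) (Fin.last n)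
  have he : MeasurePreserving e := volume_preserving_piFinSuccAbove _ _
  rw [← he.symm.lintegral_comp hf, Measure.volume_eq_prod,
    lintegral_prod_symm (fun p => f (e.symm p)) (hf.comp e.symm.measurable).aemeasurable]
  simp [e, MeasurableEquiv.piFinSuccAbove, Fin.snocEquiv]

theorem Fin.monotone_iff_init {α : Type*} [Preorder α] {n : ℕ} (x : Fin (n + 2) → α) :
    Monotone x ↔ Monotone (Fin.init x) ∧ x (Fin.last n).castSucc ≤ x (Fin.last (n + 1)) := by
  simp only [Fin.monotone_iff_le_succ, Fin.forall_iff_castSucc (n := n), Fin.init, Fin.succ_last,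
    Fin.succ_castSucc, and_comm]

theorem Fin.monotone_from_iff_init {α : Type*} [Preorder α] {n N : ℕ} (hN : N ≤ n)
    (x : Fin (n + 2) → α) :
    (∀ i j : Fin (n + 2), N ≤ (i : ℕ) → i ≤ j → x i ≤ x j) ↔
      (∀ i j : Fin (n + 1), N ≤ (i : ℕ) → i ≤ j → Fin.init x i ≤ Fin.init x j) ∧
        x (Fin.last n).castSucc ≤ x (Fin.last (n + 1)) := by
  refine ⟨fun h => ⟨fun i j hi hij => h _ _ hi (Fin.castSucc_le_castSucc_iff.2 hij),
    h _ _ (by simpa using hN) (Fin.le_last _)⟩, ?_⟩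
  rintro ⟨h, hlast⟩ i j hi hij
  induction j using Fin.lastCases with
  | last =>
    induction i using Fin.lastCases with
    | last => exact le_rfl
    | cast i => exact (h i (Fin.last n) hi (Fin.le_last i)).trans hlast
  | cast j =>
    induction i using Fin.lastCases with
    | last => exact absurd hij (Fin.castSucc_lt_last j).not_ge
    | cast i => exact h i j hi (Fin.castSucc_le_castSucc_iff.1 hij)

theorem mem_coneX_succ_iff {K : ℕ} (x : Fin (K + 2) → ℝ) :
    x ∈ coneX (K + 1) ↔
      Fin.init x ∈ coneX K ∧ x (Fin.last K).castSucc ≤ x (Fin.last (K + 1)) := by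
  simp only [coneX, mem_ofPred_eq, Fin.monotone_iff_init x, Fin.forall_iff_castSucc (n := K + 1)]
  constructor
  · rintro ⟨⟨-, hpos⟩, hmono, hlast⟩
    exact ⟨⟨hpos, hmono⟩, hlast⟩
  · rintro ⟨⟨hpos, hmono⟩, hlast⟩
    exact ⟨⟨(hpos _).trans_le hlast, hpos⟩, hmono, hlast⟩

noncomputable def muNDensity (θ : ℝ) (N : ℕ) (x : Fin (N + 1) → ℝ) : ℝ≥0∞ :=
  ENNReal.ofReal (θ * (N.factorial : ℝ) / (x (Fin.last N)) ^ (N + 1))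

theorem measurable_muNDensity (θ : ℝ) (N : ℕ) : Measurable (muNDensity θ N) := by
  unfold muNDensity; fun_prop

theorem measurableSet_coneX (N : ℕ) : MeasurableSet (coneX N) := by
  unfold coneX Monotone
  measurability

theorem muN_apply (θ : ℝ) (N : ℕ) {S : Set (Fin (N + 1) → ℝ)} (hS : MeasurableSet S) :
    muN θ N S = ∫⁻ x in S ∩ coneX N, muNDensity θ N x := by
  rw [muN, withDensity_apply _ hS, Measure.restrict_restrict hS]
  rfl

theorem lintegral_Ici_muNDensity_snoc (θ : ℝ) {K : ℕ} {v : Fin (K + 1) → ℝ}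
    (hv : 0 < v (Fin.last K)) :
    ∫⁻ y in Ici (v (Fin.last K)), muNDensity θ (K + 1) (Fin.snoc v y) = muNDensity θ K v := by
  simp only [muNDensity, Fin.snoc_last]
  rw [lintegral_Ici_div_pow _ hv, Nat.factorial_succ]
  congr 1
  push_cast
  field_simp

def extendUp {K : ℕ} (C : Set (Fin (K + 1) → ℝ)) : Set (Fin (K + 2) → ℝ) :=
  {x | Fin.init x ∈ C ∧ x (Fin.last K).castSucc ≤ x (Fin.last (K + 1))}

theorem snoc_mem_extendUp {K : ℕ} {C : Set (Fin (K + 1) → ℝ)} (v : Fin (K + 1) → ℝ) (y : ℝ) :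
    (Fin.snoc v y : Fin (K + 2) → ℝ) ∈ extendUp C ↔ v ∈ C ∧ v (Fin.last K) ≤ y := by
  simp [extendUp, Fin.init_snoc]

theorem MeasurableSet.extendUp {K : ℕ} {C : Set (Fin (K + 1) → ℝ)} (hC : MeasurableSet C) :
    MeasurableSet (extendUp C) :=
  ((measurable_pi_lambda _ fun i => measurable_pi_apply i.castSucc) hC).inter
    (measurableSet_le (measurable_pi_apply _) (measurable_pi_apply _))

theorem extendUp_inter_coneX {K : ℕ} (C : Set (Fin (K + 1) → ℝ)) :
    extendUp C ∩ coneX (K + 1) = extendUp (C ∩ coneX K) := by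
  ext x
  simp only [extendUp, mem_inter_iff, mem_ofPred_eq, mem_coneX_succ_iff]
  tauto

theorem lintegral_indicator_extendUp_snoc (θ : ℝ) {K : ℕ} {C : Set (Fin (K + 1) → ℝ)}
    (hC : C ⊆ coneX K) (v : Fin (K + 1) → ℝ) :
    ∫⁻ y, (extendUp C).indicator (muNDensity θ (K + 1)) (Fin.snoc v y) =
      C.indicator (muNDensity θ K) v := by
  by_cases hv : v ∈ C
  · have hsec : ∀ y, (extendUp C).indicator (muNDensity θ (K + 1)) (Fin.snoc v y) =
        (Ici (v (Fin.last K))).indicator (fun y => muNDensity θ (K + 1) (Fin.snoc v y)) y :=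
      fun y => by simp only [indicator, snoc_mem_extendUp, hv, true_and, Set.mem_Ici]
    rw [lintegral_congr hsec, lintegral_indicator measurableSet_Ici,
      lintegral_Ici_muNDensity_snoc θ ((hC hv).1 _), indicator_of_mem hv]
  · simp [snoc_mem_extendUp, hv]

theorem muN_extendUp (θ : ℝ) {K : ℕ} {C : Set (Fin (K + 1) → ℝ)} (hC : MeasurableSet C) :
    muN θ (K + 1) (extendUp C) = muN θ K C := by
  have hC' : MeasurableSet (C ∩ coneX K) := hC.inter (measurableSet_coneX K)
  rw [muN_apply θ _ hC.extendUp, muN_apply θ _ hC, extendUp_inter_coneX,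
    ← lintegral_indicator hC'.extendUp, ← lintegral_indicator hC',
    lintegral_eq_lintegral_snoc ((measurable_muNDensity θ _).indicator hC'.extendUp)]
  exact lintegral_congr fun v => lintegral_indicator_extendUp_snoc θ inter_subset_right v

/-- The set `B_{N↑M}` of the informal statement. -/
def liftSet {N : ℕ} (B : Set (Fin (N + 1) → ℝ)) (M : ℕ) (h : N ≤ M) : Set (Fin (M + 1) → ℝ) :=
  {x | (fun i : Fin (N + 1) => x (Fin.castLE (Nat.succ_le_succ h) i)) ∈ B ∧
    ∀ i j : Fin (M + 1), N ≤ (i : ℕ) → i ≤ j → x i ≤ x j}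

theorem liftSet_self {N : ℕ} (B : Set (Fin (N + 1) → ℝ)) : liftSet B N le_rfl = B := by
  ext x
  refine ⟨fun hx => hx.1, fun hx => ⟨hx, fun i j hi hij => ?_⟩⟩
  obtain rfl : i = j := Fin.ext (by have := j.isLt; have := Fin.le_def.1 hij; omega)
  exact le_rfl

theorem liftSet_succ {N M : ℕ} (B : Set (Fin (N + 1) → ℝ)) (h : N ≤ M) :
    liftSet B (M + 1) (h.trans M.le_succ) = extendUp (liftSet B M h) := by
  ext x
  simp only [liftSet, extendUp, mem_ofPred_eq, Fin.monotone_from_iff_init h x, and_assoc]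
  rfl

theorem MeasurableSet.liftSet {N : ℕ} {B : Set (Fin (N + 1) → ℝ)} (hB : MeasurableSet B)
    (M : ℕ) (h : N ≤ M) : MeasurableSet (liftSet B M h) := by
  induction M, h using Nat.le_induction with
  | base => rwa [liftSet_self]
  | succ M h ih => rw [liftSet_succ B h]; exact ih.extendUp

theorem muN_liftSet (θ : ℝ) {N : ℕ} {B : Set (Fin (N + 1) → ℝ)} (hB : MeasurableSet B) (M : ℕ)
    (h : N ≤ M) : muN θ M (liftSet B M h) = muN θ N B := by
  induction M, h using Nat.le_induction with
  | base => rw [liftSet_self]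
  | succ M h ih =>
    rw [liftSet_succ B h, muN_extendUp θ (hB.liftSet M h), ih]

theorem muN_consistent (θ : ℝ) (N M : ℕ) (hNM : N < M)
    (B : Set (Fin (N + 1) → ℝ)) (hB : MeasurableSet B) :
    muN θ M
      {x : Fin (M + 1) → ℝ |
        (fun i : Fin (N + 1) => x (Fin.castLE (by omega) i)) ∈ B ∧
        ∀ i j : Fin (M + 1), N ≤ (i : ℕ) → i ≤ j → x i ≤ x j} = muN θ N B :=
  muN_liftSet θ hB M hNM.le
end

section
/- For 1 ≤ i ≤ j ≤ N and α > 1, the μ^(N)-measure of the set B_{ij}^{(N)} = {(x₁,...,x_N,y) ∈ X_N : 0 < x₁ < ... < x_i ≤ 1 < x_{i+1} < ... < x_j ≤ α < x_{j+1} < ... < y} equals (θ/j) · C(j,i) · α^{-i} · (1 - α^{-1})^{j-i}, where C(j,i) is the binomial coefficient. -/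
open MeasureTheory Finset

/-!
On this set the coordinates fall into three consecutive blocks, lying in `(0, 1]`, `(1, α]` and
`(α, ∞)`, so strict monotonicity only constrains each block internally. Integrate the coordinates
out one at a time, smallest first. A block of `m` coordinates in `(a, b]` contributes the simplex
volume `(b - a)^m / m!`, which gives `1 / i!` and `(α - 1)^(j-i) / (j-i)!`. The `N + 1 - j`
coordinates above `α`, integrated against `y^{-(N+1)}` with `∫_c^∞ t^{-(k+1)} dt = c^{-k} / k`
at each step, contribute `(j - 1)! / (N! α^j)`.
-/

open Set ENNReal
open scoped Nat

theorem lintegral_fin_cons {α : Type*} [MeasureSpace α] [SigmaFinite (volume : Measure α)]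
    {n : ℕ} {f : (Fin (n + 1) → α) → ℝ≥0∞} (hf : Measurable f) :
    ∫⁻ x, f x = ∫⁻ t : α, ∫⁻ w : Fin n → α, f (Fin.cons t w) := by
  have e := (volume_preserving_piFinSuccAbove (fun _ : Fin (n + 1) => α) 0).symm
  rw [← e.lintegral_comp hf, Measure.volume_eq_prod]
  refine (lintegral_prod _ (hf.comp e.measurable).aemeasurable).trans ?_
  simp [MeasurableEquiv.piFinSuccAbove_symm_apply, Fin.consEquiv]

theorem setLIntegral_Ioc_pow_div_factorial {a b : ℝ} (hab : a ≤ b) (m : ℕ) :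
    ∫⁻ t in Ioc a b, ENNReal.ofReal ((b - t) ^ m / m !) =
      ENNReal.ofReal ((b - a) ^ (m + 1) / (m + 1) !) := by
  rw [← ofReal_integral_eq_lintegral_ofReal (Continuous.integrableOn_Ioc (by fun_prop))
    (ae_restrict_of_forall_mem measurableSet_Ioc fun t ht => by
      have : 0 ≤ b - t := by linarith [ht.2]
      positivity),
    ← intervalIntegral.integral_of_le hab, intervalIntegral.integral_div,
    intervalIntegral.integral_comp_sub_left (fun t => t ^ m), integral_pow, Nat.factorial_succ]
  congr 1
  rw [sub_self, zero_pow m.succ_ne_zero, sub_zero]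
  push_cast
  field_simp

theorem setLIntegral_Ioi_one_div_pow {c : ℝ} (hc : 0 < c) (k : ℕ) :
    ∫⁻ t in Ioi c, ENNReal.ofReal (1 / t ^ (k + 2)) =
      ENNReal.ofReal (1 / ((k + 1) * c ^ (k + 1))) := by
  have hexp : (-(k + 2 : ℝ)) < -1 := by linarith [(k.cast_nonneg : (0 : ℝ) ≤ k)]
  have hrpow : ∀ t ∈ Ioi c, 1 / t ^ (k + 2) = t ^ (-(k + 2 : ℝ)) := fun t ht => by
    rw [Real.rpow_neg (hc.trans ht).le, one_div, ← Real.rpow_natCast]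
    push_cast
    rfl
  rw [setLIntegral_congr_fun measurableSet_Ioi fun t ht => by rw [hrpow t ht],
    ← ofReal_integral_eq_lintegral_ofReal (integrableOn_Ioi_rpow_of_lt hexp hc)
      (ae_restrict_of_forall_mem measurableSet_Ioi fun t ht => Real.rpow_nonneg (hc.trans ht).le _),
    integral_Ioi_rpow_of_lt hexp hc]
  congr 1
  rw [show -((k : ℝ) + 2) + 1 = -((k + 1 : ℕ) : ℝ) by push_cast; ring, Real.rpow_neg hc.le,
    Real.rpow_natCast]
  push_cast
  field_simp

/-- Keeping `a` as a lower bound of every coordinate makes the set stable under peeling off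
`x 0`, which becomes the new `a`. -/
def increasingTuples (n : ℕ) (a : ℝ) (s : ℕ → Set ℝ) : Set (Fin n → ℝ) :=
  {x | StrictMono x ∧ ∀ p : Fin n, x p ∈ Ioi a ∩ s p}

theorem increasingTuples_zero (a : ℝ) (s : ℕ → Set ℝ) : increasingTuples 0 a s = univ :=
  eq_univ_of_forall fun _ => ⟨fun p => p.elim0, fun p => p.elim0⟩

theorem measurableSet_increasingTuples {n : ℕ} {a : ℝ} {s : ℕ → Set ℝ}
    (hs : ∀ p, MeasurableSet (s p)) : MeasurableSet (increasingTuples n a s) := by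
  have hmono : MeasurableSet {x : Fin n → ℝ | StrictMono x} := by
    simp only [StrictMono, ofPred_forall]
    exact .iInter fun p => .iInter fun q => .iInter fun _ =>
      measurableSet_lt (measurable_pi_apply p) (measurable_pi_apply q)
  simp only [increasingTuples, ofPred_and, ofPred_forall]
  exact hmono.inter <| .iInter fun p => (measurable_pi_apply p) (measurableSet_Ioi.inter (hs p))

theorem cons_mem_increasingTuples {n : ℕ} {a t : ℝ} {s : ℕ → Set ℝ} {w : Fin n → ℝ} :
    Fin.cons t w ∈ increasingTuples (n + 1) a s ↔
      t ∈ Ioi a ∩ s 0 ∧ w ∈ increasingTuples n t (fun p => s (p + 1)) := by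
  simp only [increasingTuples, mem_ofPred_eq, Fin.strictMono_cons, Fin.forall_fin_succ,
    Fin.cons_zero, Fin.cons_succ, Fin.val_zero, Fin.val_succ, mem_inter_iff, Set.mem_Ioi]
  constructor
  · rintro ⟨⟨hlt, hw⟩, ⟨hat, ht⟩, hrest⟩
    exact ⟨⟨hat, ht⟩, hw, fun p => ⟨hlt p, (hrest p).2⟩⟩
  · rintro ⟨⟨hat, ht⟩, hw, hrest⟩
    exact ⟨⟨fun p => (hrest p).1, hw⟩, ⟨hat, ht⟩, fun p => ⟨hat.trans (hrest p).1, (hrest p).2⟩⟩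

theorem setLIntegral_increasingTuples_succ {n : ℕ} {a : ℝ} {s : ℕ → Set ℝ}
    (hs : ∀ p, MeasurableSet (s p)) {g : (Fin (n + 1) → ℝ) → ℝ≥0∞} (hg : Measurable g) :
    ∫⁻ x in increasingTuples (n + 1) a s, g x =
      ∫⁻ t in Ioi a ∩ s 0, ∫⁻ w in increasingTuples n t (fun p => s (p + 1)),
        g (Fin.cons t w) := by
  rw [← lintegral_indicator (measurableSet_increasingTuples hs),
    lintegral_fin_cons (hg.indicator (measurableSet_increasingTuples hs)),
    ← lintegral_indicator (measurableSet_Ioi.inter (hs 0))]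
  congr 1 with t
  by_cases ht : t ∈ Ioi a ∩ s 0
  · rw [indicator_of_mem ht, ← lintegral_indicator (measurableSet_increasingTuples fun _ => hs _)]
    congr 1 with w
    by_cases hw : w ∈ increasingTuples n t fun p => s (p + 1)
    · rw [indicator_of_mem hw, indicator_of_mem (cons_mem_increasingTuples.2 ⟨ht, hw⟩)]
    · rw [indicator_of_notMem hw,
        indicator_of_notMem fun h => hw (cons_mem_increasingTuples.1 h).2]
  · simp [cons_mem_increasingTuples, ht]

def prependCap (m : ℕ) (b : ℝ) (s : ℕ → Set ℝ) : ℕ → Set ℝ :=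
  fun p => if p < m then Iic b else Ioi b ∩ s (p - m)

theorem measurableSet_prependCap {m : ℕ} {b : ℝ} {s : ℕ → Set ℝ}
    (hs : ∀ p, MeasurableSet (s p)) (p : ℕ) : MeasurableSet (prependCap m b s p) := by
  unfold prependCap
  split_ifs
  exacts [measurableSet_Iic, measurableSet_Ioi.inter (hs _)]

theorem increasingTuples_prependCap_zero {n : ℕ} {a b : ℝ} (hab : a ≤ b) (s : ℕ → Set ℝ) :
    increasingTuples n a (prependCap 0 b s) = increasingTuples n b s := by
  ext x
  simp only [increasingTuples, prependCap, Nat.not_lt_zero, if_false, Nat.sub_zero, mem_ofPred_eq,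
    mem_inter_iff, Set.mem_Ioi]
  exact and_congr_right fun _ => forall_congr' fun p =>
    ⟨fun h => h.2, fun h => ⟨hab.trans_lt h.1, h⟩⟩

theorem setLIntegral_increasingTuples_prependCap {h : ℝ → ℝ≥0∞} (hh : Measurable h)
    {s : ℕ → Set ℝ} (hs : ∀ p, MeasurableSet (s p)) (e m : ℕ) {a b : ℝ} (hab : a ≤ b) :
    ∫⁻ x in increasingTuples (e + m + 1) a (prependCap m b s), h (x (Fin.last _)) =
      ENNReal.ofReal ((b - a) ^ m / m !) *
        ∫⁻ y in increasingTuples (e + 1) b s, h (y (Fin.last e)) := by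
  induction m generalizing a with
  | zero => simp [increasingTuples_prependCap_zero hab]
  | succ m ih =>
    have hshift : (fun p => prependCap (m + 1) b s (p + 1)) = prependCap m b s := by
      funext p
      simp [prependCap, Nat.add_sub_add_right]
    refine (setLIntegral_increasingTuples_succ (n := e + m + 1) (measurableSet_prependCap hs)
      (g := fun x => h (x (Fin.last _))) (hh.comp (measurable_pi_apply _))).trans ?_
    simp only [Fin.cons_last, hshift]
    rw [show Ioi a ∩ prependCap (m + 1) b s 0 = Ioc a b by simp [prependCap, Ioi_inter_Iic],
      setLIntegral_congr_fun measurableSet_Ioc fun t ht => ih ht.2,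
      lintegral_mul_const _ (by fun_prop), setLIntegral_Ioc_pow_div_factorial hab]

theorem setLIntegral_increasingTuples_one_div_pow_last {r e : ℕ} (her : e < r) {c : ℝ}
    (hc : 0 < c) :
    ∫⁻ x in increasingTuples (e + 1) c (fun _ => univ),
        ENNReal.ofReal (1 / x (Fin.last e) ^ (r + 1)) =
      ENNReal.ofReal ((r - e - 1)! / (r ! * c ^ (r - e))) := by
  induction e generalizing c with
  | zero =>
    obtain ⟨k, rfl⟩ : ∃ k, r = k + 1 := ⟨r - 1, by omega⟩
    refine (setLIntegral_increasingTuples_succ (n := 0) (fun _ => MeasurableSet.univ)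
      (g := fun x => ENNReal.ofReal (1 / x (Fin.last 0) ^ (k + 1 + 1))) (by fun_prop)).trans ?_
    simp only [Fin.last_zero, Fin.cons_zero, increasingTuples_zero, Measure.restrict_univ,
      lintegral_const, volume_pi, Measure.pi_univ, Finset.univ_eq_empty, Finset.prod_empty,
      mul_one, Set.inter_univ]
    rw [setLIntegral_Ioi_one_div_pow hc k]
    congr 1
    simp only [Nat.sub_zero, Nat.add_sub_cancel, Nat.factorial_succ]
    push_cast
    field_simp
  | succ e ih =>
    obtain ⟨k, rfl⟩ : ∃ k, r = e + k + 2 := ⟨r - e - 2, by omega⟩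
    refine (setLIntegral_increasingTuples_succ (n := e + 1) (fun _ => MeasurableSet.univ)
      (g := fun x => ENNReal.ofReal (1 / x (Fin.last (e + 1)) ^ (e + k + 2 + 1)))
      (by fun_prop)).trans ?_
    simp only [Fin.cons_last, Set.inter_univ]
    rw [setLIntegral_congr_fun measurableSet_Ioi fun t ht => ih (by omega) (hc.trans ht),
      show e + k + 2 - e - 1 = k + 1 by omega, show e + k + 2 - e = k + 2 by omega,
      show e + k + 2 - (e + 1) - 1 = k by omega, show e + k + 2 - (e + 1) = k + 1 by omega,
      setLIntegral_congr_fun measurableSet_Ioi fun t _ => by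
        rw [div_mul_eq_div_div, div_eq_mul_one_div _ (t ^ _), ENNReal.ofReal_mul (by positivity)],
      lintegral_const_mul _ (by fun_prop), setLIntegral_Ioi_one_div_pow hc k,
      ← ENNReal.ofReal_mul (by positivity), Nat.factorial_succ]
    congr 1
    push_cast
    field_simp

theorem setOf_strictMono_three_blocks_eq {n i j : ℕ} (hij : i ≤ j) {a b c : ℝ} (hbc : b ≤ c) :
    {x : Fin (n + 1) → ℝ |
        StrictMono x ∧ a < x 0 ∧
        (∀ p : Fin (n + 1), (p : ℕ) < i → x p ≤ b) ∧
        (∀ p : Fin (n + 1), i ≤ (p : ℕ) → (p : ℕ) < j → b < x p ∧ x p ≤ c) ∧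
        (∀ p : Fin (n + 1), j ≤ (p : ℕ) → c < x p)} =
      increasingTuples (n + 1) a (prependCap i b (prependCap (j - i) c fun _ => univ)) := by
  ext x
  simp only [increasingTuples, prependCap, mem_ofPred_eq, mem_inter_iff, Set.mem_Ioi,
    Set.inter_univ]
  constructor
  · rintro ⟨hx, h0, hlow, hmid, hhigh⟩
    refine ⟨hx, fun p => ⟨h0.trans_le (hx.monotone (Fin.zero_le p)), ?_⟩⟩
    split_ifs
    · exact hlow p ‹_›
    · exact hmid p (by omega) (by omega)
    · exact ⟨hbc.trans_lt (hhigh p (by omega)), hhigh p (by omega)⟩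
  · rintro ⟨hx, hp⟩
    refine ⟨hx, (hp 0).1, fun p hpi => ?_, fun p hip hpj => ?_, fun p hjp => ?_⟩
    · simpa [hpi] using (hp p).2
    · simpa [hip.not_gt, show (p : ℕ) - i < j - i by omega] using (hp p).2
    · exact (by simpa [show ¬ (p : ℕ) < i by omega, show ¬ (p : ℕ) - i < j - i by omega]
        using (hp p).2 : b < x p ∧ c < x p).2

theorem muN_increasingTuples (θ : ℝ) (N : ℕ) {s : ℕ → Set ℝ} (hs : ∀ p, MeasurableSet (s p)) :
    muN θ N (increasingTuples (N + 1) 0 s) = ENNReal.ofReal (θ * N !) *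
      ∫⁻ x in increasingTuples (N + 1) 0 s, ENNReal.ofReal (1 / x (Fin.last N) ^ (N + 1)) := by
  have hmeas := measurableSet_increasingTuples (n := N + 1) (a := 0) hs
  have hcone : increasingTuples (N + 1) 0 s ⊆ coneX N :=
    fun _ hx => ⟨fun p => (hx.2 p).1, hx.1.monotone⟩
  rw [muN, withDensity_apply _ hmeas, Measure.restrict_restrict hmeas,
    inter_eq_self_of_subset_left hcone, ← lintegral_const_mul _ (by fun_prop)]
  refine setLIntegral_congr_fun hmeas fun x hx => ?_
  rw [← ENNReal.ofReal_mul' (one_div_nonneg.2 (pow_nonneg (hx.2 _).1.le _)), mul_one_div]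

theorem factorial_mul_blockVolumes_eq (θ : ℝ) (N : ℕ) {α : ℝ} (hα : α ≠ 0) {i l : ℕ}
    (hli : l + i ≠ 0) :
    θ * N ! * (1 / i ! * ((α - 1) ^ l / l ! * ((l + i - 1)! / (N ! * α ^ (l + i))))) =
      θ / (l + i : ℕ) * (l + i).choose i * α⁻¹ ^ i * (1 - α⁻¹) ^ l := by
  have hchoose : ((l + i).choose i * l ! * i ! : ℝ) = (l + i)! := by
    exact_mod_cast Nat.add_choose_mul_factorial_mul_factorial l i
  have hpred : ((l + i : ℕ) * (l + i - 1)! : ℝ) = (l + i)! := by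
    exact_mod_cast Nat.mul_factorial_pred hli
  rw [show 1 - α⁻¹ = (α - 1) / α by field_simp, div_pow, inv_pow, pow_add]
  field_simp
  linear_combination θ * (α - 1) ^ l * (hpred - hchoose)

theorem muN_Bij_general (θ : ℝ) (α : ℝ) (hα : 1 < α)
    (N i j : ℕ) (hi : 1 ≤ i) (hij : i ≤ j) (hjN : j ≤ N) :
    muN θ N
      {x : Fin (N + 1) → ℝ |
        StrictMono x ∧ 0 < x 0 ∧
        (∀ p : Fin (N + 1), (p : ℕ) < i → x p ≤ 1) ∧
        (∀ p : Fin (N + 1), i ≤ (p : ℕ) → (p : ℕ) < j → 1 < x p ∧ x p ≤ α) ∧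
        (∀ p : Fin (N + 1), j ≤ (p : ℕ) → α < x p)} =
      ENNReal.ofReal (θ / j * (Nat.choose j i : ℝ) * α⁻¹ ^ i * (1 - α⁻¹) ^ (j - i)) := by
  obtain ⟨l, rfl⟩ := Nat.exists_eq_add_of_le' hij
  obtain ⟨e, rfl⟩ : ∃ e, N = e + l + i := ⟨N - (l + i), by omega⟩
  have hdensity : Measurable fun y : ℝ => ENNReal.ofReal (1 / y ^ (e + l + i + 1)) := by fun_prop
  rw [setOf_strictMono_three_blocks_eq hij hα.le, Nat.add_sub_cancel,
    muN_increasingTuples θ _ (measurableSet_prependCap (measurableSet_prependCap fun _ => .univ)),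
    setLIntegral_increasingTuples_prependCap hdensity
      (measurableSet_prependCap fun _ => .univ) (e + l) i zero_le_one,
    setLIntegral_increasingTuples_prependCap hdensity (fun _ => .univ) e l hα.le,
    setLIntegral_increasingTuples_one_div_pow_last (by omega) (by linarith),
    show e + l + i - e - 1 = l + i - 1 by omega, show e + l + i - e = l + i by omega,
    sub_zero, one_pow,
    ← ENNReal.ofReal_mul' (by positivity), ← ENNReal.ofReal_mul' (by positivity),
    ← ENNReal.ofReal_mul' (by positivity),
    factorial_mul_blockVolumes_eq θ _ (by positivity) (by omega)]

theorem muN_Bij (θ : ℝ) (hθ : 0 < θ) (α : ℝ) (hα : 1 < α)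
    (N i j : ℕ) (hi : 1 ≤ i) (hij : i ≤ j) (hjN : j ≤ N) :
    muN θ N
      {x : Fin (N + 1) → ℝ |
        StrictMono x ∧ 0 < x 0 ∧
        (∀ p : Fin (N + 1), (p : ℕ) < i → x p ≤ 1) ∧
        (∀ p : Fin (N + 1), i ≤ (p : ℕ) → (p : ℕ) < j → 1 < x p ∧ x p ≤ α) ∧
        (∀ p : Fin (N + 1), j ≤ (p : ℕ) → α < x p)} =
      ENNReal.ofReal (θ / j * (Nat.choose j i : ℝ) * α⁻¹ ^ i * (1 - α⁻¹) ^ (j - i)) :=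
  muN_Bij_general θ α hα N i j hi hij hjN
end

section
/- For 1 ≤ i ≤ N and α > 1, the μ^(N)-measure of the set B_{i,>N}^{(N)} = {(x₁,...,x_N,y) ∈ X_N : 0 < x₁ < ... < x_i ≤ 1 < x_{i+1} < ... < x_N < y ≤ α} equals (θ/i) · I_{1-α^{-1}}(N-i+1, i), where I_x(a,b) is the regularized incomplete beta function. -/
open MeasureTheory Finset intervalIntegral

/-- The regularized (normalized) incomplete beta function `I_x(a,b)` for natural
parameters `a, b ≥ 1`. -/
noncomputable def regIncBeta (x : ℝ) (a b : ℕ) : ℝ :=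
  (∫ t in (0 : ℝ)..x, t ^ (a - 1) * (1 - t) ^ (b - 1)) /
    (∫ t in (0 : ℝ)..1, t ^ (a - 1) * (1 - t) ^ (b - 1))

/-!
Write `N = i + m`. Splitting `x` into its first `i` and its last `m + 1` coordinates identifies
the set with the product of the ordered simplices `0 < x₁ < ⋯ < x_i ≤ 1` and
`1 < x_{i+1} < ⋯ < x_N < y ≤ α`, while the density only depends on `y`. The first simplex has
volume `1 / i!`; integrating out `x_{i+1}, …, x_N` in the second leaves
`θ N! / (i! m!) ∫₁^α (y - 1)^m / y^{N+1} dy`. The substitution `t = 1 - 1/y` turns this into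
`θ N! / (i! m!) ∫₀^{1-1/α} t^m (1 - t)^{i-1} dt`, and the complete beta integral
`∫₀¹ t^m (1 - t)^{i-1} dt = m! (i-1)! / N!` turns it into `(θ / i) I_{1-1/α}(m + 1, i)`.
-/

open scoped ENNReal Nat

lemma strictMono_snoc_iff {α : Type*} [Preorder α] {n : ℕ} {v : Fin n → α} {y : α} :
    StrictMono (Fin.snoc v y : Fin (n + 1) → α) ↔ StrictMono v ∧ ∀ p, v p < y := by
  refine ⟨fun h => ⟨fun p q hpq => ?_, fun p => ?_⟩, fun ⟨hv, hy⟩ => ?_⟩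
  · simpa using h (Fin.castSucc_lt_castSucc_iff.2 hpq)
  · simpa using h (Fin.castSucc_lt_last p)
  · intro a b hab
    obtain ⟨a, rfl⟩ := Fin.exists_castSucc_eq.2 (hab.trans_le (Fin.le_last b)).ne
    rcases Fin.eq_castSucc_or_eq_last b with ⟨b, rfl⟩ | rfl
    · simpa using hv (Fin.castSucc_lt_castSucc_iff.1 hab)
    · simpa using hy a

lemma strictMono_of_castAdd_of_natAdd {α : Type*} [Preorder α] {k l : ℕ}
    {x : Fin (k + l) → α} (h₁ : StrictMono (x ∘ Fin.castAdd l))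
    (h₂ : StrictMono (x ∘ Fin.natAdd k))
    (h : ∀ p q, x (Fin.castAdd l p) < x (Fin.natAdd k q)) : StrictMono x := by
  intro a b hab
  induction a using Fin.addCases with
  | left p =>
    induction b using Fin.addCases with
    | left q => exact h₁ ((Fin.strictMono_castAdd l).lt_iff_lt.1 hab)
    | right q => exact h p q
  | right p =>
    induction b using Fin.addCases with
    | left q => exact absurd hab (by simp [Fin.lt_def]; omega)
    | right q => exact h₂ ((Fin.strictMono_natAdd k).lt_iff_lt.1 hab)

section Slices

variable {α : Type*} [MeasureSpace α] [SigmaFinite (volume : Measure α)]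

lemma setLIntegral_comp_last {n : ℕ} {S : Set (Fin (n + 1) → α)} (hS : MeasurableSet S)
    {g : α → ℝ≥0∞} (hg : Measurable g) :
    ∫⁻ x in S, g (x (Fin.last n)) =
      ∫⁻ y, volume {v : Fin n → α | Fin.snoc v y ∈ S} * g y := by
  set e := MeasurableEquiv.piFinSuccAbove (fun _ => α) (Fin.last n)
  have he : MeasurePreserving e.symm := (volume_preserving_piFinSuccAbove (fun _ => α) _).symm
  have hsnoc : ∀ y v, e.symm (y, v) = Fin.snoc v y := fun y v => by
    simp [e, MeasurableEquiv.piFinSuccAbove, Fin.insertNthEquiv, Fin.insertNth_last']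
  set F := S.indicator fun x : Fin (n + 1) → α => g (x (Fin.last n))
  have hF : Measurable fun z => F (e.symm z) :=
    ((hg.comp (measurable_pi_apply _)).indicator hS).comp e.symm.measurable
  rw [← lintegral_indicator hS, ← he.lintegral_comp_emb e.symm.measurableEmbedding,
    Measure.volume_eq_prod, lintegral_prod _ hF.aemeasurable]
  refine lintegral_congr fun y => ?_
  have hslice : MeasurableSet {v : Fin n → α | Fin.snoc v y ∈ S} := by
    have h := (e.symm.measurable.comp (measurable_prodMk_left (x := y))) hS
    simpa only [Set.preimage, Function.comp_apply, hsnoc] using h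
  have hind : (fun v => F (e.symm (y, v))) = {v | Fin.snoc v y ∈ S}.indicator fun _ => g y := by
    ext v
    by_cases hv : Fin.snoc v y ∈ S <;> simp [F, hsnoc, hv]
  rw [hind, lintegral_indicator_const hslice, mul_comm]

end Slices

section FinAddSplit

variable {α : Type*}

def finAddSplit [MeasurableSpace α] (k l : ℕ) :
    (Fin (k + l) → α) ≃ᵐ (Fin k → α) × (Fin l → α) :=
  (MeasurableEquiv.piCongrLeft (fun _ => α) finSumFinEquiv).symm.trans
    (MeasurableEquiv.sumPiEquivProdPi fun _ => α)

lemma finAddSplit_apply [MeasurableSpace α] (k l : ℕ) (x : Fin (k + l) → α) :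
    finAddSplit k l x = (fun p => x (Fin.castAdd l p), fun q => x (Fin.natAdd k q)) :=
  rfl

variable [MeasureSpace α] [SigmaFinite (volume : Measure α)]

lemma measurePreserving_finAddSplit (k l : ℕ) :
    MeasurePreserving (finAddSplit (α := α) k l) :=
  (volume_measurePreserving_piCongrLeft (fun _ => α) finSumFinEquiv).symm.trans
    (volume_measurePreserving_sumPiEquivProdPi fun _ => α)

lemma setLIntegral_preimage_finAddSplit_prod {k l : ℕ} (A : Set (Fin k → α))
    (C : Set (Fin l → α)) {f : (Fin l → α) → ℝ≥0∞} (hf : Measurable f) :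
    ∫⁻ x in finAddSplit k l ⁻¹' (A ×ˢ C), f (fun q => x (Fin.natAdd k q)) =
      volume A * ∫⁻ w in C, f w := by
  refine ((measurePreserving_finAddSplit k l).setLIntegral_comp_preimage_emb
    (finAddSplit k l).measurableEmbedding (fun z => f z.2) (A ×ˢ C)).trans ?_
  rw [Measure.volume_eq_prod, ← Measure.prod_restrict,
    lintegral_prod (fun z => f z.2) (hf.comp measurable_snd).aemeasurable]
  exact (setLIntegral_const A (∫⁻ w in C, f w)).trans (mul_comm _ _)

end FinAddSplit

def orderedSimplex (n : ℕ) (I : Set ℝ) : Set (Fin n → ℝ) :=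
  {x | StrictMono x ∧ ∀ p, x p ∈ I}

lemma measurableSet_orderedSimplex (n : ℕ) {I : Set ℝ} (hI : MeasurableSet I) :
    MeasurableSet (orderedSimplex n I) := by
  simp only [orderedSimplex, StrictMono, Set.ofPred_and]
  measurability

lemma volume_orderedSimplex_zero (I : Set ℝ) : volume (orderedSimplex 0 I) = 1 := by
  have : orderedSimplex 0 I = Set.univ :=
    Set.eq_univ_of_forall fun _ => ⟨fun p => p.elim0, fun p => p.elim0⟩
  rw [this, volume_pi, Measure.pi_univ]
  simp

lemma snoc_mem_orderedSimplex_iff {n : ℕ} {I : Set ℝ} {v : Fin n → ℝ} {y : ℝ} :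
    Fin.snoc v y ∈ orderedSimplex (n + 1) I ↔
      y ∈ I ∧ v ∈ orderedSimplex n (I ∩ Set.Iio y) := by
  simp only [orderedSimplex, Set.mem_ofPred_eq, strictMono_snoc_iff, Fin.forall_iff_castSucc,
    Fin.snoc_last, Fin.snoc_castSucc, Set.mem_inter_iff, Set.mem_Iio, forall_and]
  tauto

lemma setLIntegral_orderedSimplex_comp_last {n : ℕ} {I : Set ℝ} (hI : MeasurableSet I)
    {g : ℝ → ℝ≥0∞} (hg : Measurable g) :
    ∫⁻ x in orderedSimplex (n + 1) I, g (x (Fin.last n)) =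
      ∫⁻ y in I, volume (orderedSimplex n (I ∩ Set.Iio y)) * g y := by
  rw [setLIntegral_comp_last (measurableSet_orderedSimplex _ hI) hg, ← lintegral_indicator hI]
  refine lintegral_congr fun y => ?_
  by_cases hy : y ∈ I <;> simp [snoc_mem_orderedSimplex_iff, hy]

lemma volume_orderedSimplex_succ {n : ℕ} {I : Set ℝ} (hI : MeasurableSet I) :
    volume (orderedSimplex (n + 1) I) =
      ∫⁻ y in I, volume (orderedSimplex n (I ∩ Set.Iio y)) := by
  simpa using setLIntegral_orderedSimplex_comp_last (n := n) hI (g := 1) measurable_const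

lemma setLIntegral_Ioc_eq_ofReal_intervalIntegral {f : ℝ → ℝ} {a b : ℝ} (hab : a ≤ b)
    (hf : ContinuousOn f (Set.Icc a b)) (hf₀ : ∀ y ∈ Set.Ioc a b, 0 ≤ f y) :
    ∫⁻ y in Set.Ioc a b, ENNReal.ofReal (f y) = ENNReal.ofReal (∫ y in a..b, f y) := by
  rw [integral_of_le hab, ofReal_integral_eq_lintegral_ofReal
    (hf.integrableOn_Icc.mono_set Set.Ioc_subset_Icc_self)
    ((ae_restrict_iff' measurableSet_Ioc).2 (Filter.Eventually.of_forall hf₀))]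

lemma setLIntegral_Ioc_sub_pow_div_factorial (n : ℕ) {a b : ℝ} (hab : a ≤ b) :
    ∫⁻ y in Set.Ioc a b, ENNReal.ofReal ((y - a) ^ n / n !) =
      ENNReal.ofReal ((b - a) ^ (n + 1) / (n + 1)!) := by
  rw [setLIntegral_Ioc_eq_ofReal_intervalIntegral hab (by fun_prop)
    (fun y hy => by have := hy.1.le; positivity)]
  congr 1
  rw [intervalIntegral.integral_div, intervalIntegral.integral_comp_sub_right (fun y => y ^ n),
    sub_self, integral_pow, Nat.factorial_succ]
  push_cast
  field_simp
  ring

lemma volume_orderedSimplex_Ioo (n : ℕ) {a b : ℝ} (hab : a ≤ b) :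
    volume (orderedSimplex n (Set.Ioo a b)) = ENNReal.ofReal ((b - a) ^ n / n !) := by
  induction n generalizing b with
  | zero => simp [volume_orderedSimplex_zero]
  | succ n ih =>
    rw [volume_orderedSimplex_succ measurableSet_Ioo, setLIntegral_congr Ioo_ae_eq_Ioc,
      ← setLIntegral_Ioc_sub_pow_div_factorial n hab]
    refine setLIntegral_congr_fun measurableSet_Ioc fun y hy => ?_
    rw [Set.Ioo_inter_Iio, min_eq_right hy.2, ih hy.1.le]

lemma setLIntegral_orderedSimplex_Ioc_comp_last (n : ℕ) {a b : ℝ} {g : ℝ → ℝ≥0∞}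
    (hg : Measurable g) :
    ∫⁻ x in orderedSimplex (n + 1) (Set.Ioc a b), g (x (Fin.last n)) =
      ∫⁻ y in Set.Ioc a b, ENNReal.ofReal ((y - a) ^ n / n !) * g y := by
  rw [setLIntegral_orderedSimplex_comp_last measurableSet_Ioc hg]
  refine setLIntegral_congr_fun measurableSet_Ioc fun y hy => ?_
  have hIoo : Set.Ioc a b ∩ Set.Iio y = Set.Ioo a y := by
    ext z
    simp only [Set.mem_inter_iff, Set.mem_Ioc, Set.mem_Iio, Set.mem_Ioo]
    exact ⟨fun h => ⟨h.1.1, h.2⟩, fun h => ⟨⟨h.1, h.2.le.trans hy.2⟩, h.2⟩⟩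
  rw [hIoo, volume_orderedSimplex_Ioo n hy.1.le]

lemma volume_orderedSimplex_Ioc (n : ℕ) {a b : ℝ} (hab : a ≤ b) :
    volume (orderedSimplex n (Set.Ioc a b)) = ENNReal.ofReal ((b - a) ^ n / n !) := by
  cases n with
  | zero => simp [volume_orderedSimplex_zero]
  | succ n =>
    rw [← setLIntegral_Ioc_sub_pow_div_factorial n hab]
    simpa using setLIntegral_orderedSimplex_Ioc_comp_last n (a := a) (b := b)
      (g := fun _ => 1) measurable_const

lemma preimage_finAddSplit_orderedSimplex_Ioc_prod {i m : ℕ} (hi : 1 ≤ i) (a b c : ℝ) :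
    finAddSplit i (m + 1) ⁻¹'
        (orderedSimplex i (Set.Ioc a b) ×ˢ orderedSimplex (m + 1) (Set.Ioc b c)) =
      {x : Fin (i + m + 1) → ℝ | StrictMono x ∧ a < x 0 ∧
        (∀ p : Fin (i + m + 1), (p : ℕ) < i → x p ≤ b) ∧
        (∀ p : Fin (i + m + 1), i ≤ (p : ℕ) → b < x p) ∧ x (Fin.last (i + m)) ≤ c} := by
  ext x
  simp only [Set.mem_preimage, finAddSplit_apply, Set.mem_prod, orderedSimplex,
    Set.mem_ofPred_eq, Set.mem_Ioc]
  constructor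
  · rintro ⟨⟨h₁, hA⟩, h₂, hC⟩
    refine ⟨strictMono_of_castAdd_of_natAdd h₁ h₂ fun p q => (hA p).2.trans_lt (hC q).1,
      (hA ⟨0, hi⟩).1, fun p hp => (hA ⟨p, hp⟩).2, fun p hp => ?_, (hC (Fin.last m)).2⟩
    obtain ⟨q, rfl⟩ : ∃ q : Fin (m + 1), Fin.natAdd i q = p :=
      ⟨⟨p - i, by omega⟩, Fin.ext (by simp; omega)⟩
    exact (hC q).1
  · rintro ⟨hx, h0, hA, hC, hc⟩
    exact ⟨⟨hx.comp (Fin.strictMono_castAdd _),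
        fun p => ⟨h0.trans_le (hx.monotone (Fin.zero_le _)), hA _ p.isLt⟩⟩,
      hx.comp (Fin.strictMono_natAdd _),
        fun q => ⟨hC _ (Nat.le_add_right _ _), (hx.monotone (Fin.le_last _)).trans hc⟩⟩

lemma integral_pow_mul_one_sub_pow (a b : ℕ) :
    ∫ t in (0 : ℝ)..1, t ^ a * (1 - t) ^ b = a ! * b ! / (a + b + 1)! := by
  induction b generalizing a with
  | zero => simp [Nat.factorial_succ]; field_simp
  | succ b ih =>
    have hsplit : ∫ t in (0 : ℝ)..1, t ^ a * (1 - t) ^ (b + 1) =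
        (∫ t in (0 : ℝ)..1, t ^ a * (1 - t) ^ b) -
          ∫ t in (0 : ℝ)..1, t ^ (a + 1) * (1 - t) ^ b := by
      rw [← intervalIntegral.integral_sub (by apply Continuous.intervalIntegrable; fun_prop)
        (by apply Continuous.intervalIntegrable; fun_prop)]
      congr 1 with t
      ring
    rw [hsplit, ih, ih, show a + 1 + b + 1 = a + b + 1 + 1 by omega,
      show a + (b + 1) + 1 = a + b + 1 + 1 by omega]
    simp only [Nat.factorial_succ]
    push_cast
    field_simp
    ring

lemma integral_sub_one_pow_div_pow (a b : ℕ) {α : ℝ} (hα : 0 < α) :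
    ∫ y in (1 : ℝ)..α, (y - 1) ^ a / y ^ (a + b + 2) =
      ∫ t in (0 : ℝ)..1 - α⁻¹, t ^ a * (1 - t) ^ b := by
  have hpos : ∀ t ∈ Set.uIcc (0 : ℝ) (1 - α⁻¹), 0 < 1 - t := by
    intro t ht
    have := inv_pos.2 hα
    rcases Set.mem_uIcc.1 ht with h | h <;> linarith [h.2]
  have hderiv : ∀ t ∈ Set.uIcc (0 : ℝ) (1 - α⁻¹),
      HasDerivAt (fun t => (1 - t)⁻¹) ((1 - t) ^ 2)⁻¹ t := fun t ht => by
    simpa using ((hasDerivAt_id t).const_sub 1).fun_inv (hpos t ht).ne'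
  have hcont : ContinuousOn (fun y : ℝ => (y - 1) ^ a / y ^ (a + b + 2))
      ((fun t => (1 - t)⁻¹) '' Set.uIcc (0 : ℝ) (1 - α⁻¹)) := by
    rintro _ ⟨t, ht, rfl⟩
    exact (((continuousAt_id.sub continuousAt_const).pow a).div (continuousAt_id.pow _)
      (pow_ne_zero _ (inv_pos.2 (hpos t ht)).ne')).continuousWithinAt
  have hsub := integral_comp_mul_deriv' hderiv
    (ContinuousOn.inv₀ (by fun_prop) fun t ht => pow_ne_zero _ (hpos t ht).ne') hcont
  simp only [sub_zero, inv_one, sub_sub_cancel, inv_inv] at hsub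
  rw [← hsub]
  refine integral_congr fun t ht => ?_
  have h := (hpos t ht).ne'
  simp only [Function.comp_apply]
  rw [show (1 - t)⁻¹ - 1 = t / (1 - t) by field_simp; ring, div_pow, inv_pow, div_inv_eq_mul,
    pow_add, pow_add]
  field_simp

lemma regIncBeta_eq_integral (k m : ℕ) {α : ℝ} (hα : 0 < α) :
    regIncBeta (1 - α⁻¹) (m + 1) (k + 1) =
      (m + k + 1)! / (m ! * k !) * ∫ y in (1 : ℝ)..α, (y - 1) ^ m / y ^ (m + k + 2) := by
  rw [regIncBeta, Nat.add_sub_cancel, Nat.add_sub_cancel, integral_pow_mul_one_sub_pow,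
    integral_sub_one_pow_div_pow m k hα]
  field_simp

lemma factorial_inv_mul_integral_eq_regIncBeta (θ : ℝ) {α : ℝ} (hα : 0 < α) {i : ℕ}
    (hi : 1 ≤ i) (m : ℕ) :
    (i ! : ℝ)⁻¹ *
        ∫ y in (1 : ℝ)..α, (y - 1) ^ m / m ! * (θ * (i + m)! / y ^ (i + m + 1)) =
      θ / i * regIncBeta (1 - α⁻¹) (m + 1) i := by
  obtain ⟨k, rfl⟩ : ∃ k, i = k + 1 := ⟨i - 1, by omega⟩
  have hy : ∀ y : ℝ, (y - 1) ^ m / m ! * (θ * (k + 1 + m)! / y ^ (k + 1 + m + 1)) =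
      θ * (m + k + 1)! / m ! * ((y - 1) ^ m / y ^ (m + k + 2)) := fun y => by
    rw [show k + 1 + m = m + k + 1 by omega]
    ring
  simp_rw [hy]
  rw [intervalIntegral.integral_const_mul, regIncBeta_eq_integral k m hα, Nat.factorial_succ]
  push_cast
  field_simp

lemma ofReal_mul_setLIntegral_eq_regIncBeta {θ α : ℝ} (hθ : 0 ≤ θ) (hα : 1 < α) {i : ℕ}
    (hi : 1 ≤ i) (m : ℕ) :
    ENNReal.ofReal (1 / i !) * ∫⁻ y in Set.Ioc 1 α,
        ENNReal.ofReal ((y - 1) ^ m / m !) * ENNReal.ofReal (θ * (i + m)! / y ^ (i + m + 1)) =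
      ENNReal.ofReal (θ / i * regIncBeta (1 - α⁻¹) (m + 1) i) := by
  have hcont : ContinuousOn
      (fun y : ℝ => (y - 1) ^ m / m ! * (θ * (i + m)! / y ^ (i + m + 1))) (Set.Icc 1 α) :=
    ContinuousOn.mul (by fun_prop) (continuousOn_const.div (continuousOn_pow _)
      fun y hy => pow_ne_zero _ (by linarith [hy.1]))
  have hnonneg : ∀ y ∈ Set.Ioc (1 : ℝ) α, 0 ≤ (y - 1) ^ m / m ! := fun y hy => by
    have := hy.1.le
    positivity
  rw [setLIntegral_congr_fun measurableSet_Ioc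
      fun y hy => (ENNReal.ofReal_mul (hnonneg y hy)).symm,
    setLIntegral_Ioc_eq_ofReal_intervalIntegral hα.le hcont
      fun y hy => mul_nonneg (hnonneg y hy) (by have := hy.1.le; positivity),
    ← ENNReal.ofReal_mul (by positivity), one_div,
    factorial_inv_mul_integral_eq_regIncBeta θ (by linarith) hi]

lemma muN_apply_of_subset {θ : ℝ} {N : ℕ} {S : Set (Fin (N + 1) → ℝ)}
    (hS : MeasurableSet S) (hSX : S ⊆ coneX N) :
    muN θ N S = ∫⁻ x in S, ENNReal.ofReal (θ * N ! / x (Fin.last N) ^ (N + 1)) := by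
  rw [muN, withDensity_apply _ hS, Measure.restrict_restrict hS, Set.inter_eq_left.2 hSX]

theorem muN_Bi_gtN (θ : ℝ) (hθ : 0 < θ) (α : ℝ) (hα : 1 < α)
    (N i : ℕ) (hi : 1 ≤ i) (hiN : i ≤ N) :
    muN θ N
      {x : Fin (N + 1) → ℝ |
        StrictMono x ∧ 0 < x 0 ∧
        (∀ p : Fin (N + 1), (p : ℕ) < i → x p ≤ 1) ∧
        (∀ p : Fin (N + 1), i ≤ (p : ℕ) → 1 < x p) ∧
        x (Fin.last N) ≤ α} =
      ENNReal.ofReal (θ / i * regIncBeta (1 - α⁻¹) (N - i + 1) i) := by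
  obtain ⟨m, rfl⟩ : ∃ m, N = i + m := ⟨N - i, by omega⟩
  have hg : Measurable fun y : ℝ => ENNReal.ofReal (θ * (i + m)! / y ^ (i + m + 1)) := by
    fun_prop
  rw [← preimage_finAddSplit_orderedSimplex_Ioc_prod hi, muN_apply_of_subset]
  -- `Fin.last (i + m)` is `Fin.natAdd i (Fin.last m)` by definition.
  · refine (setLIntegral_preimage_finAddSplit_prod _ _
      (f := fun w => ENNReal.ofReal (θ * (i + m)! / w (Fin.last m) ^ (i + m + 1)))
      (hg.comp (measurable_pi_apply _))).trans ?_
    rw [volume_orderedSimplex_Ioc _ zero_le_one, setLIntegral_orderedSimplex_Ioc_comp_last _ hg,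
      sub_zero, one_pow, Nat.add_sub_cancel_left]
    exact ofReal_mul_setLIntegral_eq_regIncBeta hθ.le hα hi m
  · exact (finAddSplit _ _).measurable ((measurableSet_orderedSimplex _ measurableSet_Ioc).prod
      (measurableSet_orderedSimplex _ measurableSet_Ioc))
  · rw [preimage_finAddSplit_orderedSimplex_Ioc_prod hi]
    rintro x ⟨hx, h0, -⟩
    exact ⟨fun p => h0.trans_le (hx.monotone (Fin.zero_le p)), hx.monotone⟩
end

section
/- For fixed i ≥ 1 and α > 1, the series ∑_{j=i}^∞ (θ/j)·C(j,i)·α^{-i}·(1-α^{-1})^{j-i} converges and equals θ/i. -/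
open Finset

/-!
Since `C(j, i) / j = C(j - 1, i - 1) / i`, the series is `θ α⁻ⁱ / i` times the negative binomial
series `∑ₙ C(n + i - 1, i - 1) qⁿ = (1 - q)⁻ⁱ` at `q = 1 - α⁻¹`, and `1 - q = α⁻¹`.
-/

theorem inv_cast_succ_mul_choose_succ {𝕜 : Type*} [Field 𝕜] [CharZero 𝕜] (n k : ℕ) :
    ((n + 1 : ℕ) : 𝕜)⁻¹ * (n + 1).choose (k + 1) = ((k + 1 : ℕ) : 𝕜)⁻¹ * n.choose k := by
  have h : ((n + 1 : ℕ) : 𝕜) * n.choose k = (n + 1).choose (k + 1) * ((k + 1 : ℕ) : 𝕜) := by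
    exact_mod_cast Nat.add_one_mul_choose_eq n k
  field_simp
  linear_combination h.symm

theorem hasSum_inv_mul_choose_mul_geometric {𝕜 : Type*} [NormedField 𝕜] [CharZero 𝕜]
    [HasSummableGeomSeries 𝕜] {q : 𝕜} (hq : ‖q‖ < 1) {i : ℕ} (hi : i ≠ 0) :
    HasSum (fun j : ℕ => if i ≤ j then (j : 𝕜)⁻¹ * j.choose i * q ^ (j - i) else 0)
      ((i : 𝕜)⁻¹ / (1 - q) ^ i) := by
  obtain ⟨k, rfl⟩ := Nat.exists_eq_succ_of_ne_zero hi
  rw [← hasSum_nat_add_iff' (k + 1), sum_eq_zero fun j hj => if_neg (by simpa using hj),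
    sub_zero, div_eq_mul_one_div]
  refine ((hasSum_choose_mul_geometric_of_norm_lt_one k hq).mul_left _).congr_fun fun n => ?_
  rw [if_pos (Nat.le_add_left _ _), Nat.add_sub_cancel, ← add_assoc,
    inv_cast_succ_mul_choose_succ, mul_assoc]

theorem lambda_row_sum_general (θ : ℝ) (α : ℝ) (hα : 1 < α) (i : ℕ) (hi : 1 ≤ i) :
    HasSum
      (fun j : ℕ =>
        if i ≤ j then θ / j * (Nat.choose j i : ℝ) * α⁻¹ ^ i * (1 - α⁻¹) ^ (j - i) else 0)
      (θ / i) := by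
  have hα₀ : 0 < α⁻¹ := inv_pos.2 (zero_lt_one.trans hα)
  have hq : ‖1 - α⁻¹‖ < 1 := by
    rw [Real.norm_eq_abs, abs_lt]
    constructor <;> linarith [inv_lt_one_of_one_lt₀ hα]
  have h := (hasSum_inv_mul_choose_mul_geometric hq (Nat.one_le_iff_ne_zero.mp hi)).mul_left
    (θ * α⁻¹ ^ i)
  rw [sub_sub_cancel, mul_div_left_comm, mul_div_cancel_right₀ _ (pow_ne_zero i hα₀.ne'),
    inv_mul_eq_div] at h
  refine h.congr_fun fun j => ?_
  split_ifs <;> ring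

theorem lambda_row_sum (θ : ℝ) (hθ : 0 < θ) (α : ℝ) (hα : 1 < α) (i : ℕ) (hi : 1 ≤ i) :
    HasSum
      (fun j : ℕ =>
        if i ≤ j then θ / j * (Nat.choose j i : ℝ) * α⁻¹ ^ i * (1 - α⁻¹) ^ (j - i) else 0)
      (θ / i) :=
  lambda_row_sum_general θ α hα i hi
end

section
/- Let 0 < t₁ < ... < t_r and 0 ≤ x₁ ≤ ... ≤ x_r with x_m < t_m for each m. Define U_m = (0, x_m] × (t_m, ∞). Then μ^(1)(⋃_{m=1}^r U_m) = θ ∑_{m=1}^r x_m (t_m^{-1} - t_{m+1}^{-1}), with the convention t_{r+1} = ∞ and ∞^{-1} = 0. -/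
/-!
Since `x` is monotone, a point `p` lies in `⋃ U_m` iff `0 < p 0 ≤ x m` for the last index `m`
with `t m < p 1`. Sorting points by that index splits the union into the disjoint rectangles
`(0, x_m] × (t_m, t_{m+1}]`, which lie in `X₁` because `x_m < t_m`; by Tonelli each has measure
`x_m ∫_{t_m}^{t_{m+1}} θ / y² dy = θ x_m (t_m⁻¹ - t_{m+1}⁻¹)`.
-/

open MeasureTheory Finset
open scoped ENNReal

theorem lintegral_Ioi_ofReal_div_sq {θ b : ℝ} (hθ : 0 ≤ θ) (hb : 0 < b) :
    ∫⁻ y in Set.Ioi b, ENNReal.ofReal (θ / y ^ 2) = ENNReal.ofReal (θ * b⁻¹) := by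
  have hpow : ∀ y ∈ Set.Ioi b, θ / y ^ 2 = θ * y ^ (-2 : ℝ) := fun y hy => by
    rw [Real.rpow_neg (hb.trans hy).le, Real.rpow_two, div_eq_mul_inv]
  have hint : ∫ y in Set.Ioi b, y ^ (-2 : ℝ) = b⁻¹ := by
    rw [integral_Ioi_rpow_of_lt (by norm_num) hb]
    norm_num [Real.rpow_neg_one]
  rw [setLIntegral_congr_fun measurableSet_Ioi fun y hy => by rw [hpow y hy],
    ← ofReal_integral_eq_lintegral_ofReal
      ((integrableOn_Ioi_rpow_of_lt (by norm_num) hb).const_mul θ), integral_const_mul, hint]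
  filter_upwards [ae_restrict_mem measurableSet_Ioi] with y hy
  have := hb.trans hy
  positivity

theorem lintegral_Ioc_ofReal_div_sq {θ b c : ℝ} (hθ : 0 ≤ θ) (hb : 0 < b) (hbc : b ≤ c) :
    ∫⁻ y in Set.Ioc b c, ENNReal.ofReal (θ / y ^ 2) =
      ENNReal.ofReal (θ * (b⁻¹ - c⁻¹)) := by
  have hc : 0 < c := hb.trans_le hbc
  have hsplit := lintegral_union (μ := volume) (f := fun y => ENNReal.ofReal (θ / y ^ 2))
    measurableSet_Ioi (Set.Ioc_disjoint_Ioi_same (a := b) (b := c))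
  rw [Set.Ioc_union_Ioi_eq_Ioi hbc, lintegral_Ioi_ofReal_div_sq hθ hb,
    lintegral_Ioi_ofReal_div_sq hθ hc] at hsplit
  rw [mul_sub, ENNReal.ofReal_sub _ (by positivity), hsplit,
    ENNReal.add_sub_cancel_right ENNReal.ofReal_ne_top]

theorem muN_one_prod {θ : ℝ} {A B : Set ℝ} (hA : A ⊆ Set.Ioi 0)
    (hAB : ∀ a ∈ A, ∀ b ∈ B, a ≤ b) :
    muN θ 1 {p : Fin 2 → ℝ | p 0 ∈ A ∧ p 1 ∈ B} =
      volume A * ∫⁻ y in B, ENNReal.ofReal (θ / y ^ 2) := by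
  set e := MeasurableEquiv.finTwoArrow (α := ℝ)
  have hpre : {p : Fin 2 → ℝ | p 0 ∈ A ∧ p 1 ∈ B} = e ⁻¹' (A ×ˢ B) := rfl
  have hcone : {p : Fin 2 → ℝ | p 0 ∈ A ∧ p 1 ∈ B} ⊆ coneX 1 := by
    rintro p ⟨hpA, hpB⟩
    have hp0 : 0 < p 0 := hA hpA
    have hp01 : p 0 ≤ p 1 := hAB _ hpA _ hpB
    refine ⟨fun i => ?_, Fin.monotone_iff_le_succ.2 fun i => ?_⟩
    · fin_cases i
      exacts [hp0, hp0.trans_le hp01]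
    · fin_cases i
      exact hp01
  have hdens : ∀ p : Fin 2 → ℝ,
      θ * (Nat.factorial 1 : ℝ) / p (Fin.last 1) ^ (1 + 1) = θ / (e p).2 ^ 2 := fun p => by
    simp [e, MeasurableEquiv.finTwoArrow]
  rw [muN, withDensity_apply' _, Measure.restrict_restrict_of_subset hcone, hpre]
  simp only [hdens]
  rw [(volume_preserving_finTwoArrow ℝ).setLIntegral_comp_preimage_emb e.measurableEmbedding
      (fun q : ℝ × ℝ => ENNReal.ofReal (θ / q.2 ^ 2)), Measure.volume_eq_prod,
    setLIntegral_prod _ (by fun_prop)]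
  exact (setLIntegral_const A (∫⁻ y in B, ENNReal.ofReal (θ / y ^ 2))).trans (mul_comm _ _)

def gapAbove {ι : Type*} [Preorder ι] (t : ι → ℝ) (m : ι) : Set ℝ :=
  {y | t m < y ∧ ∀ k, m < k → y ≤ t k}

section gapAbove

variable {ι : Type*} [LinearOrder ι] (t : ι → ℝ)

theorem pairwise_disjoint_gapAbove : Pairwise (Function.onFun Disjoint (gapAbove t)) := by
  intro m k hmk
  rcases hmk.lt_or_gt with h | h
  · exact Set.disjoint_left.2 fun y hm hk => (hm.2 k h).not_gt hk.1
  · exact Set.disjoint_left.2 fun y hm hk => (hk.2 m h).not_gt hm.1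

theorem exists_le_mem_gapAbove [Finite ι] {m₀ : ι} {y : ℝ} (hy : t m₀ < y) :
    ∃ m, m₀ ≤ m ∧ y ∈ gapAbove t m := by
  obtain ⟨m, hm, hmax⟩ := Set.exists_max_image {k | t k < y} id (Set.toFinite _) ⟨m₀, hy⟩
  exact ⟨m, hmax m₀ hy, hm, fun k hk => not_lt.1 fun hky => (hmax k hky).not_gt hk⟩

theorem measurableSet_gapAbove [Countable ι] (m : ι) : MeasurableSet (gapAbove t m) := by
  have : gapAbove t m = Set.Ioi (t m) ∩ ⋂ k, ⋂ (_ : m < k), Set.Iic (t k) := by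
    ext y
    simp [gapAbove]
  rw [this]
  exact measurableSet_Ioi.inter (.iInter fun k => .iInter fun _ => measurableSet_Iic)

theorem iUnion_rect_eq_iUnion_gapAbove [Finite ι] {x : ι → ℝ} (hx : Monotone x) :
    ⋃ m, {p : Fin 2 → ℝ | 0 < p 0 ∧ p 0 ≤ x m ∧ t m < p 1} =
      ⋃ m, {p : Fin 2 → ℝ | p 0 ∈ Set.Ioc 0 (x m) ∧ p 1 ∈ gapAbove t m} := by
  ext p
  simp only [Set.mem_iUnion, Set.mem_ofPred_eq, Set.mem_Ioc]
  constructor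
  · rintro ⟨m₀, hp0, hpx, hpt⟩
    obtain ⟨m, hm₀m, hm⟩ := exists_le_mem_gapAbove t hpt
    exact ⟨m, ⟨hp0, hpx.trans (hx hm₀m)⟩, hm⟩
  · rintro ⟨m, ⟨hp0, hpx⟩, hm⟩
    exact ⟨m, hp0, hpx, hm.1⟩

theorem muN_one_iUnion_prod_gapAbove [Fintype ι] {θ : ℝ} {x : ι → ℝ}
    (hxt : ∀ m, x m ≤ t m) :
    muN θ 1 (⋃ m, {p : Fin 2 → ℝ | p 0 ∈ Set.Ioc 0 (x m) ∧ p 1 ∈ gapAbove t m}) =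
      ∑ m, ENNReal.ofReal (x m) * ∫⁻ y in gapAbove t m, ENNReal.ofReal (θ / y ^ 2) := by
  have hmeas : ∀ m,
      MeasurableSet {p : Fin 2 → ℝ | p 0 ∈ Set.Ioc 0 (x m) ∧ p 1 ∈ gapAbove t m} := fun m =>
    (measurableSet_Ioc.preimage (measurable_pi_apply 0)).inter
      ((measurableSet_gapAbove t m).preimage (measurable_pi_apply 1))
  have hdisj : Pairwise (Function.onFun Disjoint
      fun m => {p : Fin 2 → ℝ | p 0 ∈ Set.Ioc 0 (x m) ∧ p 1 ∈ gapAbove t m}) :=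
    fun m k hmk => Set.disjoint_left.2 fun p hm hk =>
      Set.disjoint_left.1 (pairwise_disjoint_gapAbove t hmk) hm.2 hk.2
  rw [measure_iUnion hdisj hmeas, tsum_fintype]
  refine Finset.sum_congr rfl fun m _ => ?_
  rw [muN_one_prod Set.Ioc_subset_Ioi_self fun a ha b hb => (ha.2.trans (hxt m)).trans hb.1.le,
    Real.volume_Ioc, sub_zero]

end gapAbove

/-- `(t (m + 1))⁻¹`, with the convention `t r = ∞` for the index past the last one. -/
noncomputable def nextInv {r : ℕ} (t : Fin r → ℝ) (m : Fin r) : ℝ :=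
  if h : (m : ℕ) + 1 < r then (t ⟨(m : ℕ) + 1, h⟩)⁻¹ else 0

section nextInv

variable {r : ℕ} {t : Fin r → ℝ}

theorem gapAbove_eq_of_lt (ht : Monotone t) {m : Fin r} (h : (m : ℕ) + 1 < r) :
    gapAbove t m = Set.Ioc (t m) (t ⟨(m : ℕ) + 1, h⟩) := by
  ext y
  refine ⟨fun hy => ⟨hy.1, hy.2 _ (Fin.lt_def.2 (Nat.lt_succ_self _))⟩,
    fun hy => ⟨hy.1, fun k hk => hy.2.trans (ht (Fin.le_def.2 hk))⟩⟩

theorem gapAbove_eq_of_not_lt {m : Fin r} (h : ¬ (m : ℕ) + 1 < r) :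
    gapAbove t m = Set.Ioi (t m) := by
  ext y
  refine ⟨fun hy => hy.1, fun hy => ⟨hy, fun k hk => absurd (Fin.lt_def.1 hk) (by omega)⟩⟩

theorem nextInv_le_inv (ht : Monotone t) (ht0 : ∀ m, 0 < t m) (m : Fin r) :
    nextInv t m ≤ (t m)⁻¹ := by
  unfold nextInv
  split_ifs with h
  · exact inv_anti₀ (ht0 m) (ht (Fin.le_def.2 (Nat.le_succ _)))
  · exact (inv_pos.2 (ht0 m)).le

theorem lintegral_gapAbove {θ : ℝ} (hθ : 0 ≤ θ) (ht : Monotone t) (ht0 : ∀ m, 0 < t m)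
    (m : Fin r) :
    ∫⁻ y in gapAbove t m, ENNReal.ofReal (θ / y ^ 2) =
      ENNReal.ofReal (θ * ((t m)⁻¹ - nextInv t m)) := by
  unfold nextInv
  split_ifs with h
  · rw [gapAbove_eq_of_lt ht h,
      lintegral_Ioc_ofReal_div_sq hθ (ht0 m) (ht (Fin.le_def.2 (Nat.le_succ _)))]
  · rw [gapAbove_eq_of_not_lt h, lintegral_Ioi_ofReal_div_sq hθ (ht0 m), sub_zero]

end nextInv

theorem mu1_union_Um_general (θ : ℝ) (hθ : 0 < θ) (r : ℕ)
    (t x : Fin r → ℝ) (ht : StrictMono t) (ht0 : ∀ m, 0 < t m)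
    (hx : Monotone x) (hx0 : ∀ m, 0 ≤ x m) (hxt : ∀ m, x m < t m) :
    muN θ 1
      (⋃ m : Fin r, {p : Fin 2 → ℝ | 0 < p 0 ∧ p 0 ≤ x m ∧ t m < p 1}) =
      ENNReal.ofReal (θ * ∑ m : Fin r,
        x m * ((t m)⁻¹ -
          (if h : (m : ℕ) + 1 < r then (t ⟨(m : ℕ) + 1, h⟩)⁻¹ else 0))) := by
  rw [iUnion_rect_eq_iUnion_gapAbove t hx, muN_one_iUnion_prod_gapAbove t fun m => (hxt m).le]
  simp_rw [lintegral_gapAbove hθ.le ht.monotone ht0, ← ENNReal.ofReal_mul (hx0 _)]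
  rw [← ENNReal.ofReal_sum_of_nonneg fun m _ => mul_nonneg (hx0 m) (mul_nonneg hθ.le
    (sub_nonneg.2 (nextInv_le_inv ht.monotone ht0 m))), Finset.mul_sum]
  exact congrArg ENNReal.ofReal (Finset.sum_congr rfl fun m _ => by unfold nextInv; ring)

theorem mu1_union_Um (θ : ℝ) (hθ : 0 < θ) (r : ℕ) (hr : 1 ≤ r)
    (t x : Fin r → ℝ) (ht : StrictMono t) (ht0 : ∀ m, 0 < t m)
    (hx : Monotone x) (hx0 : ∀ m, 0 ≤ x m) (hxt : ∀ m, x m < t m) :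
    muN θ 1
      (⋃ m : Fin r, {p : Fin 2 → ℝ | 0 < p 0 ∧ p 0 ≤ x m ∧ t m < p 1}) =
      ENNReal.ofReal (θ * ∑ m : Fin r,
        x m * ((t m)⁻¹ -
          (if h : (m : ℕ) + 1 < r then (t ⟨(m : ℕ) + 1, h⟩)⁻¹ else 0))) :=
  mu1_union_Um_general θ hθ r t x ht ht0 hx hx0 hxt
end

section
/- The function f(s,t) = (θ/(s+t)²)·(1 + t/δ)^{-θ} on the region {s ≥ δ, t ≥ 0} is a probability density: ∫_δ^∞ ∫_0^∞ f(s,t) dt ds = 1. -/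
/-!
Integrating out the birth time first, `∫_δ^∞ θ (s + t)⁻² ds = θ / (δ + t)`, and
`(1 + t/δ)^(-θ) = δ^θ (t + δ)^(-θ)`, so the marginal density of the lifetime is the Pareto density
`θ δ^θ (t + δ)^(-θ-1)`, whose integral over `t ≥ 0` is `1`. Both one-dimensional integrals are
improper integrals of shifted powers `(x + b)^r` with `r < -1`. Fubini applies because the
integrand is nonnegative and its iterated integral is finite.
-/

open MeasureTheory Set Filter Topology

section ShiftedPower

variable {r b c : ℝ}

theorem hasDerivAt_add_rpow_div (hr : r ≠ -1) {x : ℝ} (hx : 0 < x + b) :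
    HasDerivAt (fun x => (x + b) ^ (r + 1) / (r + 1)) ((x + b) ^ r) x := by
  have hr' : r + 1 ≠ 0 := fun h => hr (by linarith)
  refine ((((hasDerivAt_id' x).add_const b).rpow_const (p := r + 1) (Or.inl hx.ne')).div_const
    (r + 1)).congr_deriv ?_
  rw [add_sub_cancel_right]
  field_simp

theorem tendsto_add_rpow_div_atTop (hr : r < -1) :
    Tendsto (fun x => (x + b) ^ (r + 1) / (r + 1)) atTop (𝓝 0) := by
  have h := ((tendsto_rpow_neg_atTop (y := -(r + 1)) (by linarith)).comp
    (tendsto_atTop_add_const_right atTop b tendsto_id)).div_const (r + 1)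
  simpa using h

theorem integrableOn_Ioi_add_rpow (hr : r < -1) (hcb : 0 < c + b) :
    IntegrableOn (fun x => (x + b) ^ r) (Ioi c) :=
  integrableOn_Ioi_deriv_of_nonneg'
    (fun x hx => hasDerivAt_add_rpow_div hr.ne (by linarith [hx.out]))
    (fun x hx => Real.rpow_nonneg (by linarith [hx.out]) r) (tendsto_add_rpow_div_atTop hr)

theorem integral_Ioi_add_rpow (hr : r < -1) (hcb : 0 < c + b) :
    ∫ x in Ioi c, (x + b) ^ r = -(c + b) ^ (r + 1) / (r + 1) := by
  rw [integral_Ioi_of_hasDerivAt_of_nonneg'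
    (fun x hx => hasDerivAt_add_rpow_div hr.ne (by linarith [hx.out]))
    (fun x hx => Real.rpow_nonneg (by linarith [hx.out]) r) (tendsto_add_rpow_div_atTop hr)]
  ring

end ShiftedPower

theorem integral_prod_symm_of_ae_nonneg {α β : Type*} [MeasurableSpace α] [MeasurableSpace β]
    {μ : Measure α} {ν : Measure β} [SFinite μ] [SFinite ν] {f : α × β → ℝ}
    (hf : AEStronglyMeasurable f (μ.prod ν)) (hf_nonneg : ∀ᵐ y ∂ν, ∀ᵐ x ∂μ, 0 ≤ f (x, y))
    (hf_slice : ∀ᵐ y ∂ν, Integrable (fun x => f (x, y)) μ)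
    (hf_marginal : Integrable (fun y => ∫ x, f (x, y) ∂μ) ν) :
    ∫ z, f z ∂μ.prod ν = ∫ y, ∫ x, f (x, y) ∂μ ∂ν := by
  refine integral_prod_symm f ((integrable_prod_iff' hf).2 ⟨hf_slice, hf_marginal.congr ?_⟩)
  filter_upwards [hf_nonneg] with y hy
  exact integral_congr_ae (hy.mono fun x hx => (Real.norm_of_nonneg hx).symm)

section ShortLived

variable {θ δ t : ℝ}

theorem one_add_div_rpow_neg (hδ : 0 < δ) (ht : 0 ≤ t) :
    (1 + t / δ) ^ (-θ) = δ ^ θ * (t + δ) ^ (-θ) := by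
  rw [show 1 + t / δ = (t + δ) / δ by field_simp; ring, Real.div_rpow (by linarith) hδ.le,
    Real.rpow_neg hδ.le, div_inv_eq_mul, mul_comm]

theorem shortLivedDensity_eq_rpow :
    (fun s => θ / (s + t) ^ 2 * (1 + t / δ) ^ (-θ)) =
      fun s => θ * (1 + t / δ) ^ (-θ) * (s + t) ^ (-2 : ℝ) := by
  ext s
  rw [Real.rpow_neg_ofNat, zpow_neg, zpow_ofNat]
  ring

theorem integrableOn_shortLivedDensity_slice (hδ : 0 < δ) (ht : 0 ≤ t) :
    IntegrableOn (fun s => θ / (s + t) ^ 2 * (1 + t / δ) ^ (-θ)) (Ioi δ) := by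
  rw [shortLivedDensity_eq_rpow]
  exact (integrableOn_Ioi_add_rpow (by norm_num) (by linarith)).const_mul _

theorem integral_shortLivedDensity_slice (hδ : 0 < δ) (ht : 0 ≤ t) :
    ∫ s in Ioi δ, θ / (s + t) ^ 2 * (1 + t / δ) ^ (-θ) = θ * δ ^ θ * (t + δ) ^ (-θ - 1) := by
  rw [shortLivedDensity_eq_rpow, integral_const_mul,
    integral_Ioi_add_rpow (by norm_num) (by linarith), one_add_div_rpow_neg hδ ht,
    Real.rpow_sub_one (by linarith)]
  norm_num [add_comm δ t, Real.rpow_neg_one]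
  ring

theorem shortLivedDensity_nonneg (s : ℝ) (hθ : 0 ≤ θ) (hδ : 0 ≤ δ) (ht : 0 ≤ t) :
    0 ≤ θ / (s + t) ^ 2 * (1 + t / δ) ^ (-θ) :=
  mul_nonneg (by positivity) (Real.rpow_nonneg (by positivity) _)

theorem integrableOn_pareto_density (hθ : 0 < θ) (hδ : 0 < δ) :
    IntegrableOn (fun t => θ * δ ^ θ * (t + δ) ^ (-θ - 1)) (Ioi 0) :=
  (integrableOn_Ioi_add_rpow (by linarith) (by simpa using hδ)).const_mul _

theorem integral_pareto_density (hθ : 0 < θ) (hδ : 0 < δ) :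
    ∫ t in Ioi 0, θ * δ ^ θ * (t + δ) ^ (-θ - 1) = 1 := by
  rw [integral_const_mul, integral_Ioi_add_rpow (by linarith) (by simpa using hδ), zero_add,
    sub_add_cancel, Real.rpow_neg hδ.le]
  field_simp [(Real.rpow_pos_of_pos hδ θ).ne']

end ShortLived

theorem shortLived_density_integrates_to_one (θ δ : ℝ) (hθ : 0 < θ) (hδ : 0 < δ) :
    ∫ p in (Set.Ici δ ×ˢ Set.Ici (0 : ℝ)),
        θ / (p.1 + p.2) ^ 2 * (1 + p.2 / δ) ^ (-θ) ∂(volume : Measure (ℝ × ℝ)) = 1 := by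
  have hslice : ∀ t ∈ Ioi (0 : ℝ),
      ∫ s in Ioi δ, θ / (s + t) ^ 2 * (1 + t / δ) ^ (-θ) = θ * δ ^ θ * (t + δ) ^ (-θ - 1) :=
    fun t ht => integral_shortLivedDensity_slice hδ (le_of_lt ht)
  have h_pos : ∀ᵐ t ∂volume.restrict (Ioi (0 : ℝ)), t ∈ Ioi 0 := ae_restrict_mem measurableSet_Ioi
  rw [Measure.volume_eq_prod, ← Measure.prod_restrict, ← restrict_Ioi_eq_restrict_Ici,
    ← restrict_Ioi_eq_restrict_Ici,
    integral_prod_symm_of_ae_nonneg ?measurable ?nonneg ?slice_integrable ?marginal_integrable,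
    setIntegral_congr_fun measurableSet_Ioi hslice]
  · exact integral_pareto_density hθ hδ
  case measurable => fun_prop
  case nonneg =>
    exact h_pos.mono fun t ht => ae_of_all _ fun s => shortLivedDensity_nonneg s hθ.le hδ.le (le_of_lt ht)
  case slice_integrable =>
    exact h_pos.mono fun t ht => integrableOn_shortLivedDensity_slice hδ (le_of_lt ht)
  case marginal_integrable =>
    exact (integrableOn_pareto_density hθ hδ).congr_fun (fun t ht => (hslice t ht).symm)
      measurableSet_Ioi
end

section
/- For 0 ≤ t₁ ≤ t₂ and δ > 0, the μ^(1)-measure of the strip {(x,y) : x ≥ δ, x + t₁ < y ≤ x + t₂} equals θ·log(1 + t₂/δ) − θ·log(1 + t₁/δ). -/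
open MeasureTheory Finset

/-! Tonelli: for fixed `x ≥ δ` the `y`-integral of `1 / y²` over `(x + t₁, x + t₂]` is
`1 / (x + t₁) - 1 / (x + t₂)`, which has antiderivative `log ((x + t₁) / (x + t₂))`, tending to `0`
as `x → ∞`; hence the `x`-integral over `[δ, ∞)` is `log ((δ + t₂) / (δ + t₁))`.
The constant `θ` factors out of `ENNReal.ofReal` since the remaining density is nonnegative. -/

open Set Filter Topology Real

lemma mem_coneX_one {p : Fin 2 → ℝ} : p ∈ coneX 1 ↔ 0 < p 0 ∧ p 0 ≤ p 1 := by
  change (∀ i, 0 < p i) ∧ Monotone p ↔ _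
  rw [Fin.monotone_iff_le_succ]
  constructor
  · rintro ⟨hpos, hmono⟩
    exact ⟨hpos 0, hmono 0⟩
  · rintro ⟨h0, h01⟩
    refine ⟨fun i => ?_, fun i => ?_⟩ <;> fin_cases i
    exacts [h0, h0.trans_le h01, h01]

lemma muN_apply_of_subset_coneX (θ : ℝ) (N : ℕ) {S : Set (Fin (N + 1) → ℝ)}
    (hS : MeasurableSet S) (hSX : S ⊆ coneX N) :
    muN θ N S = ∫⁻ x in S, ENNReal.ofReal (θ * N.factorial / x (Fin.last N) ^ (N + 1)) := by
  rw [muN, withDensity_apply _ hS, Measure.restrict_restrict hS, inter_eq_left.2 hSX]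

lemma lintegral_Ioc_inv_sq {a b : ℝ} (ha : 0 < a) (hab : a ≤ b) :
    ∫⁻ y in Ioc a b, ENNReal.ofReal (y ^ 2)⁻¹ = ENNReal.ofReal (a⁻¹ - b⁻¹) := by
  have hpos : ∀ y ∈ Icc a b, y ≠ 0 := fun y hy => (ha.trans_le hy.1).ne'
  have hderiv : ∀ y ∈ uIcc a b, HasDerivAt (fun y => -y⁻¹) (y ^ 2)⁻¹ y := by
    intro y hy
    simpa using (hasDerivAt_inv (hpos y (uIcc_of_le hab ▸ hy))).fun_neg
  have hcont : ContinuousOn (fun y : ℝ => (y ^ 2)⁻¹) (Icc a b) :=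
    (continuousOn_pow 2).inv₀ fun y hy => pow_ne_zero 2 (hpos y hy)
  rw [← ofReal_integral_eq_lintegral_ofReal
      (hcont.integrableOn_Icc.mono_set Ioc_subset_Icc_self) (ae_of_all _ fun y => by positivity),
    ← intervalIntegral.integral_of_le hab,
    intervalIntegral.integral_eq_sub_of_hasDerivAt hderiv
      ((uIcc_of_le hab).symm ▸ hcont).intervalIntegrable]
  ring_nf

lemma lintegral_Ici_inv_add_sub_inv_add {δ s t : ℝ} (hs : 0 < δ + s) (hst : s ≤ t) :
    ∫⁻ x in Ici δ, ENNReal.ofReal ((x + s)⁻¹ - (x + t)⁻¹) =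
      ENNReal.ofReal (log (δ + t) - log (δ + s)) := by
  set F : ℝ → ℝ := fun x => log (x + s) - log (x + t)
  have hderiv : ∀ x ∈ Ici δ, HasDerivAt F ((x + s)⁻¹ - (x + t)⁻¹) x := by
    intro x hx
    have hxs : x + s ≠ 0 := by linarith [hx.out]
    have hxt : x + t ≠ 0 := by linarith [hx.out]
    simpa using (((hasDerivAt_id x).add_const s).log hxs).fun_sub
      (((hasDerivAt_id x).add_const t).log hxt)
  have hnonneg : ∀ x ∈ Ioi δ, 0 ≤ (x + s)⁻¹ - (x + t)⁻¹ := fun x hx =>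
    sub_nonneg.2 (inv_anti₀ (by linarith [hx.out]) (by linarith))
  have hcont : ContinuousWithinAt F (Ici δ) δ :=
    (hderiv δ self_mem_Ici).continuousAt.continuousWithinAt
  have htend : Tendsto F atTop (𝓝 0) := by
    simpa [F] using (tendsto_log_comp_add_sub_log s).sub (tendsto_log_comp_add_sub_log t)
  have hderiv' : ∀ x ∈ Ioi δ, HasDerivAt F ((x + s)⁻¹ - (x + t)⁻¹) x :=
    fun x hx => hderiv x hx.out.le
  rw [← restrict_Ioi_eq_restrict_Ici, ← ofReal_integral_eq_lintegral_ofReal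
      (integrableOn_Ioi_deriv_of_nonneg hcont hderiv' hnonneg htend)
      ((ae_restrict_mem measurableSet_Ioi).mono hnonneg),
    integral_Ioi_of_hasDerivAt_of_nonneg hcont hderiv' hnonneg htend]
  simp [F]

def strip (δ s t : ℝ) : Set (ℝ × ℝ) :=
  {q | δ ≤ q.1 ∧ q.1 + s < q.2 ∧ q.2 ≤ q.1 + t}

lemma measurableSet_strip (δ s t : ℝ) : MeasurableSet (strip δ s t) :=
  (measurableSet_le measurable_const measurable_fst).inter
    ((measurableSet_lt (by fun_prop) measurable_snd).inter
      (measurableSet_le measurable_snd (by fun_prop)))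

lemma lintegral_strip_inv_sq {δ s t : ℝ} (hs : 0 < δ + s) (hst : s ≤ t) :
    ∫⁻ q in strip δ s t, ENNReal.ofReal (q.2 ^ 2)⁻¹ =
      ENNReal.ofReal (log (δ + t) - log (δ + s)) := by
  have hsection : ∀ x,
      ∫⁻ y, (strip δ s t).indicator (fun q => ENNReal.ofReal (q.2 ^ 2)⁻¹) (x, y) =
        (Ici δ).indicator (fun x => ENNReal.ofReal ((x + s)⁻¹ - (x + t)⁻¹)) x := by
    intro x
    by_cases hx : δ ≤ x
    · have hstrip_x : ∀ y, (strip δ s t).indicator (fun q => ENNReal.ofReal (q.2 ^ 2)⁻¹) (x, y) =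
          (Ioc (x + s) (x + t)).indicator (fun y => ENNReal.ofReal (y ^ 2)⁻¹) y := by
        intro y
        simp only [indicator_apply, strip, mem_ofPred_eq, Set.mem_Ioc, hx, true_and]
      simp_rw [hstrip_x]
      rw [lintegral_indicator measurableSet_Ioc, lintegral_Ioc_inv_sq (by linarith) (by linarith),
        indicator_of_mem (show x ∈ Ici δ from hx)]
    · have hstrip_x : ∀ y,
          (strip δ s t).indicator (fun q => ENNReal.ofReal (q.2 ^ 2)⁻¹) (x, y) = 0 :=
        fun y => indicator_of_notMem (fun h => hx h.1) _
      simp_rw [hstrip_x, lintegral_zero, indicator_of_notMem (show x ∉ Ici δ from hx)]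
  have hmeas : Measurable ((strip δ s t).indicator fun q : ℝ × ℝ => ENNReal.ofReal (q.2 ^ 2)⁻¹) :=
    Measurable.indicator (by fun_prop) (measurableSet_strip δ s t)
  rw [← lintegral_indicator (measurableSet_strip δ s t), Measure.volume_eq_prod,
    lintegral_prod _ hmeas.aemeasurable, funext hsection, lintegral_indicator measurableSet_Ici,
    lintegral_Ici_inv_add_sub_inv_add hs hst]

theorem mu1_strip_general (θ : ℝ) (δ t1 t2 : ℝ) (hδ : 0 < δ)
    (ht1 : 0 ≤ t1) (ht12 : t1 ≤ t2) :
    muN θ 1 {p : Fin 2 → ℝ | δ ≤ p 0 ∧ p 0 + t1 < p 1 ∧ p 1 ≤ p 0 + t2} =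
      ENNReal.ofReal (θ * Real.log (1 + t2 / δ) - θ * Real.log (1 + t1 / δ)) := by
  set S := {p : Fin 2 → ℝ | δ ≤ p 0 ∧ p 0 + t1 < p 1 ∧ p 1 ≤ p 0 + t2}
  have hS : MeasurableSet S :=
    (measurableSet_le measurable_const (measurable_pi_apply 0)).inter
      ((measurableSet_lt (by fun_prop) (measurable_pi_apply 1)).inter
        (measurableSet_le (measurable_pi_apply 1) (by fun_prop)))
  have hSX : S ⊆ coneX 1 := fun p ⟨h0, h01, _⟩ =>
    mem_coneX_one.2 ⟨hδ.trans_le h0, by linarith⟩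
  have hdensity : ∀ p : Fin 2 → ℝ,
      ENNReal.ofReal (θ * (Nat.factorial 1) / p (Fin.last 1) ^ (1 + 1)) =
        ENNReal.ofReal θ * ENNReal.ofReal (p 1 ^ 2)⁻¹ := fun p => by
    rw [← ENNReal.ofReal_mul' (by positivity)]
    simp [div_eq_mul_inv]
  have hlog : ∀ t, 0 ≤ t → log (1 + t / δ) = log (δ + t) - log δ := fun t ht => by
    rw [← log_div (by linarith) hδ.ne', add_div, div_self hδ.ne']
  calc muN θ 1 S = ∫⁻ p in S, ENNReal.ofReal θ * ENNReal.ofReal (p 1 ^ 2)⁻¹ := by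
        simp_rw [muN_apply_of_subset_coneX θ 1 hS hSX, hdensity]
    _ = ENNReal.ofReal θ * ∫⁻ q in strip δ t1 t2, ENNReal.ofReal (q.2 ^ 2)⁻¹ := by
        rw [lintegral_const_mul _ (by fun_prop),
          ← (volume_preserving_finTwoArrow ℝ).symm.setLIntegral_comp_preimage_emb
            MeasurableEquiv.finTwoArrow.symm.measurableEmbedding]
        -- `finTwoArrow.symm q = ![q.1, q.2]`, so the preimage of `S` is `strip δ t1 t2`
        rfl
    _ = ENNReal.ofReal θ * ENNReal.ofReal (log (δ + t2) - log (δ + t1)) := by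
        rw [lintegral_strip_inv_sq (by linarith) ht12]
    _ = _ := by
        rw [← ENNReal.ofReal_mul' (sub_nonneg.2 (log_le_log (by linarith) (by linarith))),
          hlog t1 ht1, hlog t2 (ht1.trans ht12)]
        ring_nf

theorem mu1_strip (θ : ℝ) (hθ : 0 < θ) (δ t1 t2 : ℝ) (hδ : 0 < δ)
    (ht1 : 0 ≤ t1) (ht12 : t1 ≤ t2) :
    muN θ 1 {p : Fin 2 → ℝ | δ ≤ p 0 ∧ p 0 + t1 < p 1 ∧ p 1 ≤ p 0 + t2} =
      ENNReal.ofReal (θ * Real.log (1 + t2 / δ) - θ * Real.log (1 + t1 / δ)) :=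
  mu1_strip_general θ δ t1 t2 hδ ht1 ht12
end
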